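/- arXiv:2112.11697 — 16 statements merged into one kernel-verified Lean document; each statement's English description precedes it below -/
import Mathlib

section
/- The upper triangular matrix ring T_2(R) is LNZS if and only if R is reduced. -/
/-- A ring is LNZS if the left annihilator of every nilpotent element is a two-sided ideal. -/
def IsLNZS (R : Type*) [Ring R] : Prop :=
  ∀ a : R, IsNilpotent a → ∃ I : TwoSidedIdeal R, ∀ x : R, x ∈ I ↔ x * a = 0

/-- The ring `T_n(R)` of `n × n` upper triangular matrices over `R`, as a subring of the
matrix ring. -/
def upperTriangular (n : ℕ) (R : Type*) [Ring R] : Subring (Matrix (Fin n) (Fin n) R) where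
  carrier := {M | ∀ i j : Fin n, (j : ℕ) < (i : ℕ) → M i j = 0}
  zero_mem' := fun _ _ _ => rfl
  one_mem' := fun i j h => Matrix.one_apply_ne (fun hij => by omega)
  add_mem' := fun {a b} ha hb i j h => by simp [ha i j h, hb i j h]
  neg_mem' := fun {a} ha i j h => by simp [ha i j h]
  mul_mem' := fun {a b} ha hb i j h => by
    rw [Matrix.mul_apply]
    apply Finset.sum_eq_zero
    intro k _
    rcases lt_or_ge (j : ℕ) (k : ℕ) with hk | hk
    · rw [hb k j hk, mul_zero]
    · rw [ha i k (by omega), zero_mul]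


section Aux
variable {R : Type*} [Ring R]

lemma red_swap [IsReduced R] {a b : R} (h : a * b = 0) : b * a = 0 := by
  apply IsReduced.eq_zero
  exact ⟨2, by rw [pow_two, mul_assoc, ← mul_assoc a b a, h, zero_mul, mul_zero]⟩

lemma red_mid [IsReduced R] {a b : R} (h : a * b = 0) (c : R) : a * c * b = 0 := by
  have hba := red_swap h
  apply IsReduced.eq_zero
  refine ⟨2, ?_⟩
  rw [pow_two]
  have : a * c * b * (a * c * b) = a * c * (b * a) * (c * b) := by
    simp [mul_assoc]
  rw [this, hba, mul_zero, zero_mul]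

lemma red_of_sq (h : ∀ b : R, b * b = 0 → b = 0) : IsReduced R := by
  constructor
  rintro a ⟨n, hn⟩
  induction n using Nat.strong_induction_on generalizing a with
  | _ n ih =>
    match n with
    | 0 => rw [pow_zero] at hn; calc a = a * 1 := (mul_one a).symm
                                     _ = 0 := by rw [hn, mul_zero]
    | 1 => rwa [pow_one] at hn
    | (k+2) =>
      refine ih (k+1) (by omega) a ?_
      apply h
      rw [← pow_add]
      have : k + 1 + (k + 1) = (k + 2) + k := by omega
      rw [this, pow_add, hn, zero_mul]

/-- Build an element of `upperTriangular 2 R`. -/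
def tri (p q r : R) : upperTriangular 2 R :=
  ⟨!![p, q; 0, r], by intro i j h; fin_cases i <;> fin_cases j <;> simp_all⟩

end Aux

@[simp] lemma coe_tri {R : Type*} [Ring R] (p q r : R) :
    ((tri p q r : upperTriangular 2 R) : Matrix (Fin 2) (Fin 2) R) = !![p, q; 0, r] := rfl

theorem t2_isLNZS_iff_isReduced (R : Type*) [Ring R] :
    IsLNZS (upperTriangular 2 R) ↔ IsReduced R := by
  constructor
  · intro h
    apply red_of_sq
    intro b hb
    set S := upperTriangular 2 R
    set A : S := tri 0 1 b with hAdef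
    have hA3 : A ^ 3 = 0 := by
      apply Subtype.ext
      rw [show ((A ^ 3 : S) : Matrix (Fin 2) (Fin 2) R) = (!![(0:R),1;0,b]) ^ 3 from
        SubmonoidClass.coe_pow A 3]
      rw [pow_succ, pow_two, Matrix.mul_fin_two, Matrix.mul_fin_two]
      ext i j
      fin_cases i <;> fin_cases j <;> simp [hb]
    obtain ⟨I, hI⟩ := h A ⟨3, hA3⟩
    set x : S := tri (-b) 1 0 with hxdef
    set y : S := tri 1 0 0 with hydef
    have hx : x ∈ I := by
      rw [hI]
      apply Subtype.ext
      rw [MulMemClass.coe_mul]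
      rw [hxdef, hAdef, coe_tri, coe_tri, Matrix.mul_fin_two]
      ext i j
      fin_cases i <;> fin_cases j <;> simp
    have hxy : x * y ∈ I := I.mul_mem_right _ _ hx
    have hz : (x * y) * A = 0 := (hI _).1 hxy
    have hm : (((x * y) * A : S) : Matrix (Fin 2) (Fin 2) R) = 0 := by
      rw [hz]; rfl
    rw [MulMemClass.coe_mul, MulMemClass.coe_mul, hxdef, hydef, hAdef,
      coe_tri, coe_tri, coe_tri, Matrix.mul_fin_two, Matrix.mul_fin_two] at hm
    have := congrFun (congrFun hm 0) 1
    simp at this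
    exact this
  · intro hred
    haveI := hred
    rintro a ⟨n, hn⟩
    have hM10 : (a : Matrix (Fin 2) (Fin 2) R) 1 0 = 0 := a.2 1 0 (by norm_num)
    have hpow : ∀ k, ((a ^ k : upperTriangular 2 R) : Matrix (Fin 2) (Fin 2) R)
        = (a : Matrix (Fin 2) (Fin 2) R) ^ k := fun k => SubmonoidClass.coe_pow a k
    have hd : ∀ k, ((a : Matrix (Fin 2) (Fin 2) R) ^ k) 0 0
          = ((a : Matrix (Fin 2) (Fin 2) R) 0 0) ^ k
        ∧ ((a : Matrix (Fin 2) (Fin 2) R) ^ k) 1 1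
          = ((a : Matrix (Fin 2) (Fin 2) R) 1 1) ^ k := by
      intro k
      induction k with
      | zero => simp [Matrix.one_apply]
      | succ k ih =>
        have h10 : ((a : Matrix (Fin 2) (Fin 2) R) ^ k) 1 0 = 0 := by
          have h2 := (a ^ k).2 1 0 (by norm_num)
          rwa [show ((a ^ k : upperTriangular 2 R) : Matrix (Fin 2) (Fin 2) R) 1 0
            = ((a : Matrix (Fin 2) (Fin 2) R) ^ k) 1 0 from
            congrFun (congrFun (hpow k) 1) 0] at h2
        constructor
        · rw [pow_succ, pow_succ, Matrix.mul_apply, Fin.sum_univ_two, ih.1, hM10]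
          simp
        · rw [pow_succ, pow_succ, Matrix.mul_apply, Fin.sum_univ_two, ih.2, h10]
          simp
    have hMn : (a : Matrix (Fin 2) (Fin 2) R) ^ n = 0 := by
      rw [← hpow n, hn]; rfl
    have h00 : (a : Matrix (Fin 2) (Fin 2) R) 0 0 = 0 :=
      IsReduced.eq_zero _ ⟨n, by rw [← (hd n).1, hMn]; rfl⟩
    have h11 : (a : Matrix (Fin 2) (Fin 2) R) 1 1 = 0 :=
      IsReduced.eq_zero _ ⟨n, by rw [← (hd n).2, hMn]; rfl⟩
    refine ⟨TwoSidedIdeal.mk' {x : upperTriangular 2 R |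
        (x : Matrix (Fin 2) (Fin 2) R) 0 0 * (a : Matrix (Fin 2) (Fin 2) R) 0 1 = 0}
      (by simp) ?_ ?_ ?_ ?_, ?_⟩
    · intro u v hu hv
      simp only [Set.mem_setOf_eq, AddMemClass.coe_add, Matrix.add_apply, add_mul] at *
      rw [hu, hv, add_zero]
    · intro u hu
      simp only [Set.mem_setOf_eq, NegMemClass.coe_neg, Matrix.neg_apply, neg_mul] at *
      rw [hu, neg_zero]
    · intro u v hv
      simp only [Set.mem_setOf_eq, MulMemClass.coe_mul, Matrix.mul_apply,
        Fin.sum_univ_two] at *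
      rw [v.2 1 0 (by norm_num), mul_zero, add_zero, mul_assoc, hv, mul_zero]
    · intro u v hu
      simp only [Set.mem_setOf_eq, MulMemClass.coe_mul, Matrix.mul_apply,
        Fin.sum_univ_two] at *
      rw [v.2 1 0 (by norm_num), mul_zero, add_zero]
      exact red_mid hu _
    · intro x
      rw [TwoSidedIdeal.mem_mk']
      have hx10 : (x : Matrix (Fin 2) (Fin 2) R) 1 0 = 0 := x.2 1 0 (by norm_num)
      constructor
      · intro hx
        simp only [Set.mem_setOf_eq] at hx
        apply Subtype.ext
        rw [MulMemClass.coe_mul, show ((0 : upperTriangular 2 R) : Matrix (Fin 2) (Fin 2) R)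
          = 0 from rfl]
        ext i j
        rw [Matrix.mul_apply, Fin.sum_univ_two, Matrix.zero_apply]
        fin_cases i <;> fin_cases j <;>
          simp only [Fin.mk_zero, Fin.mk_one, Fin.isValue] <;>
          simp [h00, h11, hM10, hx, hx10]
      · intro hx
        have hm : ((x * a : upperTriangular 2 R) : Matrix (Fin 2) (Fin 2) R) = 0 := by
          rw [hx]; rfl
        rw [MulMemClass.coe_mul] at hm
        have h2 := congrFun (congrFun hm 0) 1
        rw [Matrix.mul_apply, Fin.sum_univ_two, h11, mul_zero, add_zero,
          Matrix.zero_apply] at h2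
        exact h2
end

section
/- For any nonzero reduced ring R and any n ≥ 3, the upper triangular matrix ring T_n(R) is not LNZS. In particular, T_3(R) is not LNZS since e_{11} e_{23} = 0 but e_{11} e_{12} e_{23} ≠ 0. -/
lemma std_mem (n : ℕ) (R : Type*) [Ring R] (i j : Fin n) (h : (i : ℕ) ≤ (j : ℕ)) (c : R) :
    Matrix.single i j c ∈ upperTriangular n R := by
  intro a b hb
  apply Matrix.single_apply_of_ne
  rintro ⟨rfl, rfl⟩
  omega

theorem tn_not_isLNZS (R : Type*) [Ring R] [Nontrivial R] (hred : IsReduced R)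
    (n : ℕ) (hn : 3 ≤ n) : ¬ IsLNZS (upperTriangular n R) := by
  intro h
  set i0 : Fin n := ⟨0, by omega⟩
  set i1 : Fin n := ⟨1, by omega⟩
  set i2 : Fin n := ⟨2, by omega⟩
  have h01 : i0 ≠ i1 := by simp [i0, i1, Fin.ext_iff]
  have h21 : i2 ≠ i1 := by simp [i2, i1, Fin.ext_iff]
  set a : upperTriangular n R := ⟨Matrix.single i1 i2 1, std_mem n R i1 i2 (by simp [i1, i2]) 1⟩
  have hnil : IsNilpotent a := by
    refine ⟨2, ?_⟩
    rw [sq]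
    apply Subtype.ext
    show (Matrix.single i1 i2 (1:R)) * Matrix.single i1 i2 1 = 0
    rw [Matrix.single_mul_single_of_ne (c := (1:R)) i1 i2 i1 h21 1]
  obtain ⟨I, hI⟩ := h a hnil
  set e11 : upperTriangular n R := ⟨Matrix.single i0 i0 1, std_mem n R i0 i0 le_rfl 1⟩
  set e12 : upperTriangular n R := ⟨Matrix.single i0 i1 1, std_mem n R i0 i1 (by simp [i0, i1]) 1⟩
  have h1 : e11 ∈ I := by
    rw [hI]
    apply Subtype.ext
    show Matrix.single i0 i0 (1:R) * Matrix.single i1 i2 1 = 0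
    rw [Matrix.single_mul_single_of_ne (c := (1:R)) i0 i0 i1 h01 1]
  have h2 : e11 * e12 ∈ I := I.mul_mem_right _ _ h1
  rw [hI] at h2
  have h4 : ((e11 * e12) * a : upperTriangular n R).val i0 i2 = 0 := by rw [h2]; rfl
  have h5 : ((e11 * e12) * a : upperTriangular n R).val = Matrix.single i0 i0 (1:R) *
      Matrix.single i0 i1 1 * Matrix.single i1 i2 1 := rfl
  rw [h5, Matrix.single_mul_single_same, Matrix.single_mul_single_same,
    Matrix.single_apply_same] at h4
  simp at h4
end

section
/- Every LNZS ring is NI, i.e., the set of nilpotent elements of an LNZS ring forms a two-sided ideal. -/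
section LNZSAux

variable {R : Type*} [Ring R]

/-- Absorption: if `u * t = 0` with `t` nilpotent, then `u * x * t = 0` for all `x`. -/
private lemma lnzs_absorb (h : IsLNZS R) {t u : R} (ht : IsNilpotent t)
    (hu : u * t = 0) (x : R) : u * x * t = 0 := by
  obtain ⟨I, hI⟩ := h t ht
  exact (hI _).1 (I.mul_mem_right u x ((hI u).2 hu))

/-- Words of the form `a * x₁ * a * x₂ * ⋯ * a` containing `k` occurrences of `a`. -/
private inductive Wd (a : R) : ℕ → R → Prop
  | base : Wd a 1 a
  | step {k w} (x : R) : Wd a k w → Wd a (k + 1) (w * x * a)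

private lemma wd_mul_pow (h : IsLNZS R) {a : R} {n : ℕ} (ha : a ^ (n + 1) = 0)
    {k : ℕ} {w : R} (hw : Wd a k w) (hk : k ≤ n + 1) : w * a ^ (n + 1 - k) = 0 := by
  induction hw with
  | base =>
      have : a * a ^ (n + 1 - 1) = a ^ (n + 1) := by
        rw [Nat.add_sub_cancel, ← pow_succ']
      rw [this, ha]
  | @step k w x hw ih =>
      have hk' : k ≤ n := by omega
      have ih' : w * a ^ (n + 1 - k) = 0 := ih (by omega)
      have hnil : IsNilpotent (a ^ (n + 1 - k)) := by
        refine ⟨n + 1, ?_⟩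
        rw [← pow_mul]
        exact pow_eq_zero_of_le (Nat.le_mul_of_pos_left _ (by omega)) ha
      have habs : w * x * a ^ (n + 1 - k) = 0 := lnzs_absorb h hnil ih' x
      have he : n + 1 - k = (n - k) + 1 := by omega
      have : w * x * a ^ ((n - k) + 1) = (w * x * a) * a ^ (n - k) := by
        rw [pow_succ']
        rw [← mul_assoc]
      rw [show n + 1 - (k + 1) = n - k from by omega]
      rw [← this, ← he, habs]

private lemma wd_top_zero (h : IsLNZS R) {a : R} {n : ℕ} (ha : a ^ (n + 1) = 0)
    {w : R} (hw : Wd a (n + 1) w) : w = 0 := by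
  have := wd_mul_pow h ha hw le_rfl
  simpa using this

/-- The set of "sandwiches" `x * a * y`. -/
private def sandwich (a : R) : Set R := {z | ∃ x y : R, z = x * a * y}

/-- Sandwiches of words with `k` occurrences of `a`. -/
private def wdSandwich (a : R) (k : ℕ) : Set R := {z | ∃ x w y : R, Wd a k w ∧ z = x * w * y}

private lemma sandwich_subset (a : R) :
    sandwich a ⊆ wdSandwich a 1 := by
  rintro z ⟨x, y, rfl⟩
  exact ⟨x, a, y, Wd.base, rfl⟩

private lemma gen_mul_mem {a : R} {k : ℕ} {w : R} (hw : Wd a k w) {c : R}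
    (hc : c ∈ AddSubgroup.closure (sandwich a)) (x y : R) :
    x * w * y * c ∈ AddSubgroup.closure (wdSandwich a (k + 1)) := by
  induction hc using AddSubgroup.closure_induction with
  | mem z hz =>
      obtain ⟨x', y', rfl⟩ := hz
      refine AddSubgroup.subset_closure ⟨x, w * (y * x') * a, y', Wd.step _ hw, ?_⟩
      noncomm_ring
  | zero => simpa using AddSubgroup.zero_mem _
  | add c₁ c₂ _ _ h₁ h₂ => simpa [mul_add] using AddSubgroup.add_mem _ h₁ h₂
  | neg c _ hc => simpa [mul_neg] using AddSubgroup.neg_mem _ hc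

private lemma mul_mem_next {a : R} {k : ℕ} {u c : R}
    (hu : u ∈ AddSubgroup.closure (wdSandwich a k))
    (hc : c ∈ AddSubgroup.closure (sandwich a)) :
    u * c ∈ AddSubgroup.closure (wdSandwich a (k + 1)) := by
  induction hu using AddSubgroup.closure_induction with
  | mem z hz =>
      obtain ⟨x, w, y, hw, rfl⟩ := hz
      exact gen_mul_mem hw hc x y
  | zero => simpa using AddSubgroup.zero_mem _
  | add u₁ u₂ _ _ h₁ h₂ => simpa [add_mul] using AddSubgroup.add_mem _ h₁ h₂
  | neg u _ hu => simpa [neg_mul] using AddSubgroup.neg_mem _ hu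

private lemma pow_mem_wd {a c : R} (hc : c ∈ AddSubgroup.closure (sandwich a)) :
    ∀ k : ℕ, c ^ (k + 1) ∈ AddSubgroup.closure (wdSandwich a (k + 1)) := by
  intro k
  induction k with
  | zero =>
      rw [pow_one]
      exact AddSubgroup.closure_mono (sandwich_subset a) hc
  | succ k ih =>
      rw [pow_succ]
      exact mul_mem_next ih hc

/-- Any element of the additive closure of sandwiches of a nilpotent element `a`
with `a ^ (n+1) = 0` satisfies `c ^ (n+1) = 0`. -/
private lemma closure_pow_zero (h : IsLNZS R) {a : R} {n : ℕ} (ha : a ^ (n + 1) = 0)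
    {c : R} (hc : c ∈ AddSubgroup.closure (sandwich a)) : c ^ (n + 1) = 0 := by
  have hmem := pow_mem_wd hc n
  have hle : AddSubgroup.closure (wdSandwich a (n + 1)) ≤ (⊥ : AddSubgroup R) := by
    rw [AddSubgroup.closure_le]
    rintro z ⟨x, w, y, hw, rfl⟩
    have := wd_top_zero h ha hw
    simp [this]
  simpa using hle hmem

private lemma closure_mul_right {a c : R} (hc : c ∈ AddSubgroup.closure (sandwich a)) (r : R) :
    c * r ∈ AddSubgroup.closure (sandwich a) := by
  induction hc using AddSubgroup.closure_induction with
  | mem z hz =>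
      obtain ⟨x, y, rfl⟩ := hz
      exact AddSubgroup.subset_closure ⟨x, y * r, by noncomm_ring⟩
  | zero => simpa using AddSubgroup.zero_mem _
  | add c₁ c₂ _ _ h₁ h₂ => simpa [add_mul] using AddSubgroup.add_mem _ h₁ h₂
  | neg c _ hc => simpa [neg_mul] using AddSubgroup.neg_mem _ hc

private lemma add_pow_sub_mem (a b : R) :
    ∀ m : ℕ, (a + b) ^ m - b ^ m ∈ AddSubgroup.closure (sandwich a) := by
  intro m
  induction m with
  | zero => simpa using AddSubgroup.zero_mem _
  | succ m ih =>
      have key : (a + b) ^ (m + 1) - b ^ (m + 1)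
          = ((a + b) ^ m - b ^ m) * (a + b) + b ^ m * a := by
        rw [pow_succ, pow_succ]; noncomm_ring
      rw [key]
      refine AddSubgroup.add_mem _ (closure_mul_right ih _) ?_
      exact AddSubgroup.subset_closure ⟨b ^ m, 1, by rw [mul_one]⟩

private lemma nilpotent_succ {a : R} (ha : IsNilpotent a) : ∃ n : ℕ, a ^ (n + 1) = 0 := by
  obtain ⟨n, hn⟩ := ha
  exact ⟨n, pow_eq_zero_of_le (Nat.le_succ n) hn⟩

private lemma lnzs_mul_left (h : IsLNZS R) {a : R} (ha : IsNilpotent a) (x : R) :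
    IsNilpotent (x * a) := by
  obtain ⟨n, hn⟩ := nilpotent_succ ha
  refine ⟨n + 1, closure_pow_zero h hn ?_⟩
  exact AddSubgroup.subset_closure ⟨x, 1, by rw [mul_one]⟩

private lemma lnzs_mul_right (h : IsLNZS R) {a : R} (ha : IsNilpotent a) (x : R) :
    IsNilpotent (a * x) := by
  obtain ⟨n, hn⟩ := nilpotent_succ ha
  refine ⟨n + 1, closure_pow_zero h hn ?_⟩
  exact AddSubgroup.subset_closure ⟨1, x, by rw [one_mul]⟩

private lemma lnzs_add (h : IsLNZS R) {a b : R} (ha : IsNilpotent a) (hb : IsNilpotent b) :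
    IsNilpotent (a + b) := by
  obtain ⟨n, hn⟩ := nilpotent_succ ha
  obtain ⟨m, hm⟩ := nilpotent_succ hb
  have hmem : (a + b) ^ (m + 1) ∈ AddSubgroup.closure (sandwich a) := by
    have := add_pow_sub_mem a b (m + 1)
    rwa [hm, sub_zero] at this
  refine ⟨(m + 1) * (n + 1), ?_⟩
  rw [pow_mul]
  exact closure_pow_zero h hn hmem

end LNZSAux

theorem isLNZS_is_NI (R : Type*) [Ring R] (h : IsLNZS R) :
    ∃ I : TwoSidedIdeal R, ∀ x : R, x ∈ I ↔ IsNilpotent x := by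
  refine ⟨TwoSidedIdeal.mk' {x : R | IsNilpotent x}
    (IsNilpotent.zero)
    (fun hx hy => lnzs_add h hx hy)
    (fun hx => hx.neg)
    (fun hy => lnzs_mul_left h hy _)
    (fun hx => lnzs_mul_right h hx _), fun x => ?_⟩
  rw [TwoSidedIdeal.mem_mk']
  rfl
end

section
/- Every LNZS ring is weakly semicommutative: if a, b in R satisfy ab = 0, then arb is nilpotent for every r in R. -/
theorem isLNZS_weaklySemicommutative (R : Type*) [Ring R] (h : IsLNZS R) :
    ∀ a b : R, a * b = 0 → ∀ r : R, IsNilpotent (a * r * b) := by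
  intro a b hab r
  obtain ⟨I, hI⟩ := h (b * a) ⟨2, by rw [sq]; rw [show b * a * (b * a) = b * (a * b) * a by noncomm_ring, hab]; simp⟩
  have ha : a ∈ I := (hI a).2 (by rw [show a * (b * a) = a * b * a by noncomm_ring, hab]; simp)
  have har : a * r ∈ I := I.mul_mem_right _ _ ha
  have h0 : a * r * (b * a) = 0 := (hI _).1 har
  exact ⟨2, by rw [sq, show a * r * b * (a * r * b) = (a * r * (b * a)) * r * b by noncomm_ring, h0]; simp⟩
end

section
/- In an LNZS ring R, if a is nilpotent then ra and ar are nilpotent for every r in R. -/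
theorem isLNZS_mul_nilpotent (R : Type*) [Ring R] (h : IsLNZS R) :
    ∀ a : R, IsNilpotent a → ∀ r : R, IsNilpotent (r * a) ∧ IsNilpotent (a * r) := by
  -- insertion lemma: for nilpotent b, x * b = 0 → x * t * b = 0
  have ins : ∀ b : R, IsNilpotent b → ∀ x t : R, x * b = 0 → x * t * b = 0 := by
    intro b hb x t hx
    obtain ⟨I, hI⟩ := h b hb
    exact (hI _).1 (I.mul_mem_right _ t ((hI x).2 hx))
  intro a ha r
  obtain ⟨n, hn⟩ := ha
  -- main claim
  have key : ∀ j, j ≤ n → (r * a) ^ j * a ^ (n - j) = 0 := by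
    intro j
    induction j with
    | zero => intro _; simpa using hn
    | succ j ih =>
      intro hjn
      have hj : j ≤ n := Nat.le_of_succ_le hjn
      have h1 : (r * a) ^ j * a ^ (n - j) = 0 := ih hj
      have hnil : IsNilpotent (a ^ (n - j)) := by
        refine ⟨n, ?_⟩
        rw [← pow_mul]
        rcases Nat.exists_eq_add_of_le (Nat.one_le_iff_ne_zero.mpr
          (Nat.sub_ne_zero_of_lt hjn) : 1 ≤ n - j) with ⟨k, hk⟩
        calc a ^ ((n - j) * n) = a ^ n * a ^ ((n-j)*n - n) := by
              rw [← pow_add]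
              congr 1
              have : n ≤ (n - j) * n := by
                calc n = 1 * n := (one_mul n).symm
                _ ≤ (n - j) * n := Nat.mul_le_mul_right n (by omega)
              omega
          _ = 0 := by rw [hn, zero_mul]
      have h2 : (r * a) ^ j * r * a ^ (n - j) = 0 := ins _ hnil _ r h1
      have hsub : n - j = (n - (j + 1)) + 1 := by omega
      calc (r * a) ^ (j + 1) * a ^ (n - (j+1))
          = (r * a) ^ j * r * (a * a ^ (n - (j+1))) := by
            rw [pow_succ]; simp [mul_assoc]
        _ = (r * a) ^ j * r * a ^ (n - j) := by rw [hsub, pow_succ']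
        _ = 0 := h2
  have hra : (r * a) ^ n = 0 := by simpa using key n le_rfl
  have comm : ∀ m : ℕ, (a * r) ^ (m + 1) = a * ((r * a) ^ m * r) := by
    intro m
    induction m with
    | zero => simp [pow_succ, mul_assoc]
    | succ k ihk => rw [pow_succ, ihk, pow_succ]; simp [mul_assoc]
  refine ⟨⟨n, hra⟩, ⟨n + 1, ?_⟩⟩
  rw [comm n, hra, zero_mul, mul_zero]
end

section
/- A ring R is a domain if and only if R is both LNZS and prime. -/
theorem isDomain_iff_isLNZS_and_prime (R : Type*) [Ring R] :
    (∀ a b : R, a * b = 0 → a = 0 ∨ b = 0) ↔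
      (IsLNZS R ∧ ∀ a b : R, (∀ r : R, a * r * b = 0) → a = 0 ∨ b = 0) := by
  constructor
  · intro h
    constructor
    · intro a ha
      have ha0 : a = 0 := by
        obtain ⟨n, hn⟩ := ha
        induction n with
        | zero => simpa using congrArg (· * a) hn
        | succ n ih =>
          rw [pow_succ] at hn
          rcases h _ _ hn with h1 | h1
          · exact ih h1
          · exact h1
      exact ⟨⊤, by simp [ha0]⟩
    · intro a b hab
      have := hab 1
      rw [mul_one] at this
      exact h a b this
  · rintro ⟨hL, hP⟩ a b hab
    by_cases ha : a = 0
    · left; exact ha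
    right
    by_contra hb
    -- step 1: show b * a = 0
    have hba : b * a = 0 := by
      have hnil : IsNilpotent (b * a) := by
        refine ⟨2, ?_⟩
        have h2 : (b * a) ^ 2 = b * (a * b) * a := by noncomm_ring
        rw [h2, hab, mul_zero, zero_mul]
      obtain ⟨I, hI⟩ := hL _ hnil
      have haI : a ∈ I := by
        rw [hI]
        calc a * (b * a) = (a * b) * a := by noncomm_ring
          _ = 0 := by rw [hab, zero_mul]
      have key : ∀ r : R, a * r * (b * a) = 0 := fun r =>
        (hI _).mp (I.mul_mem_right a r haI)
      rcases hP a (b * a) key with h1 | h1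
      · exact absurd h1 ha
      · exact h1
    -- step 2: show a * s * b = 0 for all s, contradiction with primeness
    have key2 : ∀ s : R, a * s * b = 0 := by
      intro s
      have hnil : IsNilpotent (a * s * b) := by
        refine ⟨2, ?_⟩
        have h2 : (a * s * b) ^ 2 = a * s * (b * a) * s * b := by noncomm_ring
        rw [h2, hba, mul_zero, zero_mul, zero_mul]
      obtain ⟨I, hI⟩ := hL _ hnil
      have hbI : b ∈ I := by
        rw [hI]
        calc b * (a * s * b) = (b * a) * s * b := by noncomm_ring
          _ = 0 := by rw [hba, zero_mul, zero_mul]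
      have key : ∀ r : R, b * r * (a * s * b) = 0 := fun r =>
        (hI _).mp (I.mul_mem_right b r hbI)
      rcases hP b (a * s * b) key with h1 | h1
      · exact absurd h1 hb
      · exact h1
    rcases hP a b key2 with h1 | h1
    · exact absurd h1 ha
    · exact absurd h1 hb
end

section
/- If R is an LNZS ring and s is a nilpotent element of R, then the quotient ring R/l(s) is semicommutative (here l(s) is a two-sided ideal by the LNZS hypothesis). -/
/-- In an LNZS ring, if `p * u = 0` with `u` nilpotent, then `p * r * u = 0` for all `r`. -/
lemma IsLNZS.insert {R : Type*} [Ring R] (h : IsLNZS R) {u p : R}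
    (hu : IsNilpotent u) (hp : p * u = 0) (r : R) : p * r * u = 0 := by
  obtain ⟨J, hJ⟩ := h u hu
  exact (hJ _).mp (J.mul_mem_right p r ((hJ p).mpr hp))

/-- Key combinatorial lemma: if `a ^ n = 0`, then `(a*y)^m * a^k = 0` whenever `n ≤ m + k`
and `1 ≤ k`. -/
lemma IsLNZS.block {R : Type*} [Ring R] (h : IsLNZS R) {a : R} {n : ℕ} (hn : a ^ n = 0)
    (y : R) : ∀ m k : ℕ, n ≤ m + k → 1 ≤ k → (a * y) ^ m * a ^ k = 0 := by
  intro m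
  induction m with
  | zero =>
    intro k hk _
    rw [pow_zero, one_mul]
    exact pow_eq_zero_of_le (by omega) hn
  | succ m ih =>
    intro k hk hk1
    have hak : IsNilpotent (a ^ k) := ⟨n, by rw [← pow_mul]; exact pow_eq_zero_of_le (Nat.le_mul_of_pos_left n hk1) hn⟩
    have hp : ((a * y) ^ m * a) * a ^ k = 0 := by
      rw [mul_assoc, ← pow_succ']
      exact ih (k + 1) (by omega) (by omega)
    have hins := h.insert hak hp y
    rw [pow_succ, ← mul_assoc ((a * y) ^ m) a y]
    exact hins

/-- In an LNZS ring, nilpotent elements absorb multiplication: `y * a` is nilpotent. -/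
lemma IsLNZS.nilpotent_mul {R : Type*} [Ring R] (h : IsLNZS R) {a : R}
    (ha : IsNilpotent a) (y : R) : IsNilpotent (y * a) := by
  obtain ⟨n, hn⟩ := ha
  rcases n with _ | m
  · exact ⟨1, by rw [pow_one]; simpa using congrArg (y * a * ·) hn⟩
  · refine ⟨m + 1, ?_⟩
    have key : ∀ j : ℕ, (y * a) ^ (j + 1) = y * ((a * y) ^ j * a) := by
      intro j
      induction j with
      | zero => simp
      | succ j ihj =>
        rw [pow_succ, ihj, pow_succ]
        noncomm_ring
    have hb := h.block hn y m 1 (by omega) le_rfl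
    rw [pow_one] at hb
    rw [key m, hb, mul_zero]

theorem quotient_leftAnn_semicommutative (R : Type*) [Ring R] (h : IsLNZS R)
    (s : R) (hs : IsNilpotent s) (I : TwoSidedIdeal R) (hI : ∀ x : R, x ∈ I ↔ x * s = 0) :
    ∀ a b : I.ringCon.Quotient, a * b = 0 → ∀ r : I.ringCon.Quotient, a * r * b = 0 := by
  have mem_iff : ∀ x : R, (x : I.ringCon.Quotient) = 0 ↔ x * s = 0 := by
    intro x
    rw [show (0 : I.ringCon.Quotient) = ((0 : R) : I.ringCon.Quotient) from rfl,
      RingCon.eq, I.rel_iff, sub_zero, hI]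
  intro a b hab r
  obtain ⟨x, rfl⟩ := Quotient.exists_rep a
  obtain ⟨y, rfl⟩ := Quotient.exists_rep b
  obtain ⟨z, rfl⟩ := Quotient.exists_rep r
  have hab' : (x * y) * s = 0 := by
    rw [← mem_iff]
    exact hab
  have hys : IsNilpotent (y * s) := h.nilpotent_mul hs y
  have hx : x * (y * s) = 0 := by rw [← mul_assoc]; exact hab'
  have : x * z * (y * s) = 0 := h.insert hys hx z
  show ((x * z * y : R) : I.ringCon.Quotient) = 0
  rw [mem_iff]
  rw [← mul_assoc] at this
  exact this
end

section
/- If R is an LNZS ring and H is a two-sided ideal of R such that H consists exactly of all elements x of R with x^m = 0 for a fixed positive integer m (bounded index m), then R/H is LNZS. -/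
section aux
variable {R : Type*} [Ring R]

lemma lnzs_insert (h : IsLNZS R) {a u : R} (ha : IsNilpotent a) (hu : u * a = 0) (r : R) :
    u * r * a = 0 := by
  obtain ⟨I, hI⟩ := h a ha
  exact (hI _).1 (I.mul_mem_right u r ((hI u).2 hu))

lemma pow_mul_shuffle (u v : R) : ∀ j : ℕ, (u * v) ^ (j + 1) = u * (v * u) ^ j * v := by
  intro j
  induction j with
  | zero => simp [mul_assoc]
  | succ j ih =>
      rw [pow_succ', ih, pow_succ']
      simp only [mul_assoc]

lemma shuffle (c r : R) : ∀ k : ℕ, c * (r * c) ^ k = (c * r) ^ k * c := by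
  intro k
  induction k with
  | zero => simp
  | succ k ih =>
      rw [pow_succ' (r * c), pow_succ' (c * r)]
      rw [show c * (r * c * (r * c) ^ k) = (c * r) * (c * (r * c) ^ k) by simp only [mul_assoc]]
      rw [ih]
      simp only [mul_assoc]

lemma lnzs_key (h : IsLNZS R) : ∀ n : ℕ, ∀ c r : R, c ^ n = 0 → (c * r) ^ n = 0 := by
  intro n
  induction n using Nat.strong_induction_on with
  | _ n IH =>
    intro c r hc
    match n with
    | 0 => simpa using hc
    | (n + 1) =>
      -- subclaim: for k ≤ n, c^(n+1-k) * (r*c)^k = 0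
      have claim : ∀ k : ℕ, k ≤ n → c ^ (n + 1 - k) * (r * c) ^ k = 0 := by
        intro k
        induction k with
        | zero => simpa using hc
        | succ k ihk =>
          intro hk1
          have hk : k ≤ n := Nat.le_of_succ_le hk1
          have prev := ihk hk
          -- b = c * (r*c)^k is nilpotent with b^(n+1) = 0
          have hb : (c * (r * c) ^ k) ^ (n + 1) = 0 := by
            match k with
            | 0 => simpa using hc
            | (j + 1) =>
              -- need n ≥ 1
              have hn1 : 1 ≤ n := by omega
              have hcc : (c * c) ^ n = 0 := by
                have h2 : (c * c) ^ n = c ^ (2 * n) := by rw [← pow_two, ← pow_mul]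
                have h3 : c ^ (2 * n) = c ^ (n + 1) * c ^ (n - 1) := by
                  rw [← pow_add]; congr 1; omega
                rw [h2, h3, hc, zero_mul]
              have hIH := IH n (Nat.lt_succ_self n) (c * c) (r * (c * r) ^ j) hcc
              rw [shuffle]
              rw [pow_mul_shuffle ((c * r) ^ (j + 1)) c n]
              have : c * (c * r) ^ (j + 1) = c * c * (r * (c * r) ^ j) := by
                rw [pow_succ' (c * r)]
                simp only [mul_assoc]
              rw [this, hIH, mul_zero, zero_mul]
          -- insertion
          have hub : c ^ (n - k) * (c * (r * c) ^ k) = 0 := by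
            have : c ^ (n - k) * (c * (r * c) ^ k) = c ^ (n + 1 - k) * (r * c) ^ k := by
              rw [← mul_assoc, ← pow_succ]
              congr 2
              omega
            rw [this, prev]
          have := lnzs_insert h ⟨n + 1, hb⟩ hub r
          calc c ^ (n + 1 - (k + 1)) * (r * c) ^ (k + 1)
              = c ^ (n - k) * (r * (c * (r * c) ^ k)) := by
                rw [pow_succ' (r * c)]
                simp only [mul_assoc]
                congr 2
                omega
            _ = 0 := by rw [← mul_assoc]; exact this
      have final := claim n le_rfl
      rw [pow_mul_shuffle c r n]
      have : c ^ (n + 1 - n) * (r * c) ^ n = 0 := final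
      rw [show n + 1 - n = 1 by omega, pow_one] at this
      rw [this, zero_mul]

lemma lnzs_step (h : IsLNZS R) {a t : R} (ha : IsNilpotent a) (r : R) {m : ℕ}
    (ht : (t * a) ^ m = 0) : (t * r * a) ^ m = 0 := by
  obtain ⟨n, han⟩ := ha
  have claim : ∀ k : ℕ, k ≤ m → (t * a) ^ (m - k) * (t * r * a) ^ k = 0 := by
    intro k
    induction k with
    | zero => simpa using ht
    | succ k ihk =>
      intro hk1
      have hk : k ≤ m := Nat.le_of_succ_le hk1
      have prev := ihk hk
      -- b = a * (t*r*a)^k is nilpotent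
      have hb : IsNilpotent (a * (t * r * a) ^ k) := by
        have hsh : a * (t * r * a) ^ k = (a * (t * r)) ^ k * a := by
          rw [show (t * r * a) ^ k = ((t * r) * a) ^ k by rfl, shuffle]
        rw [hsh]
        match k with
        | 0 => exact ⟨n, by simpa using han⟩
        | (j + 1) =>
          have h1 : (a * (t * r)) ^ n = 0 := lnzs_key h n a (t * r) han
          have h2 : ((a * (t * r)) ^ (j + 1)) ^ n = 0 := by
            rw [← pow_mul, show (j + 1) * n = n + j * n by ring, pow_add, h1, zero_mul]
          exact ⟨n, lnzs_key h n _ a h2⟩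
      have hub : ((t * a) ^ (m - k - 1) * t) * (a * (t * r * a) ^ k) = 0 := by
        have e1 : (t * a) ^ (m - k) = (t * a) ^ (m - k - 1) * (t * a) := by
          rw [← pow_succ]; congr 1; omega
        calc ((t * a) ^ (m - k - 1) * t) * (a * (t * r * a) ^ k)
            = (t * a) ^ (m - k - 1) * (t * a) * (t * r * a) ^ k := by
              simp only [mul_assoc]
          _ = (t * a) ^ (m - k) * (t * r * a) ^ k := by rw [← e1]
          _ = 0 := prev
      have hins := lnzs_insert h hb hub r
      calc (t * a) ^ (m - (k + 1)) * (t * r * a) ^ (k + 1)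
          = ((t * a) ^ (m - k - 1) * t) * r * (a * (t * r * a) ^ k) := by
            rw [show m - (k + 1) = m - k - 1 from (Nat.sub_sub m k 1).symm,
              pow_succ' (t * r * a)]
            simp only [mul_assoc]
        _ = 0 := hins
  have := claim m le_rfl
  simpa using this

end aux

theorem quotient_bounded_nil_isLNZS (R : Type*) [Ring R] (h : IsLNZS R)
    (m : ℕ) (hm : 0 < m) (H : TwoSidedIdeal R) (hH : ∀ x : R, x ∈ H ↔ x ^ m = 0) :
    IsLNZS H.ringCon.Quotient := by
  set Q := H.ringCon.Quotient
  have mem0 : ∀ x : R, (x : Q) = 0 ↔ x ∈ H := by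
    intro x
    rw [show (0 : Q) = ((0 : R) : Q) from (RingCon.coe_zero _).symm, RingCon.eq,
      H.rel_iff, sub_zero]
  intro A hA
  obtain ⟨a, rfl⟩ := Quotient.mk''_surjective A
  have hcoe : ∀ x : R, (Quotient.mk'' x : Q) = (x : Q) := fun _ => rfl
  rw [hcoe a] at *
  -- a is nilpotent in R
  obtain ⟨k, hk⟩ := hA
  have hak : (a ^ k : R) ∈ H := by
    rw [← mem0, RingCon.coe_pow]
    exact hk
  have hanil : IsNilpotent a := ⟨k * m, by rw [pow_mul]; exact (hH _).1 hak⟩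
  refine ⟨TwoSidedIdeal.mk' {z : Q | z * (a : Q) = 0}
    (by show (0 : Q) * (a : Q) = 0; simp) (fun {x y} hx hy => by change x * (a : Q) = 0 at hx; change y * (a : Q) = 0 at hy; show (x + y) * (a : Q) = 0; simp only [add_mul]; rw [hx, hy, add_zero])
    (fun {x} hx => by change x * (a : Q) = 0 at hx; show -x * (a : Q) = 0; simp only [neg_mul]; rw [hx, neg_zero])
    (fun {x y} hy => by change y * (a : Q) = 0 at hy; show x * y * (a : Q) = 0; simp only [mul_assoc]; rw [hy, mul_zero])
    ?_, ?_⟩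
  · -- mul_mem_right : x * a = 0 → (x * y) * a = 0
    intro x y hx
    obtain ⟨t, rfl⟩ := Quotient.mk''_surjective x
    obtain ⟨r, rfl⟩ := Quotient.mk''_surjective y
    change (t : Q) * (a : Q) = 0 at hx
    show (t : Q) * (r : Q) * (a : Q) = 0
    rw [← RingCon.coe_mul] at hx
    rw [← RingCon.coe_mul, ← RingCon.coe_mul]
    rw [mem0] at hx ⊢
    rw [hH] at hx ⊢
    exact lnzs_step h hanil r hx
  · intro x
    rw [TwoSidedIdeal.mem_mk']
    rfl
end

section
/- If the trivial extension T(R,R) of a ring R by itself is LNZS, then R is semicommutative. -/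
theorem trivialExtension_isLNZS_semicommutative (R : Type*) [Ring R]
    (h : IsLNZS (TrivSqZeroExt R R)) :
    ∀ a b : R, a * b = 0 → ∀ r : R, a * r * b = 0 := by
  intro a b hab r
  obtain ⟨I, hI⟩ := h (TrivSqZeroExt.inr b)
    ⟨2, by rw [pow_two, TrivSqZeroExt.inr_mul_inr]⟩
  have ha : TrivSqZeroExt.inl a ∈ I := (hI _).2 (by
    rw [TrivSqZeroExt.inl_mul_inr, smul_eq_mul, hab, TrivSqZeroExt.inr_zero])
  have har : TrivSqZeroExt.inl (a * r) ∈ I := by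
    rw [TrivSqZeroExt.inl_mul R a r]
    exact I.mul_mem_right _ _ ha
  have := (hI _).1 har
  rw [TrivSqZeroExt.inl_mul_inr, smul_eq_mul] at this
  simpa using congrArg TrivSqZeroExt.snd this
end

section
/- Every LNZS ring is quasi-normal: for every idempotent e in R, eR(1-e)Re = 0. -/
theorem isLNZS_quasiNormal (R : Type*) [Ring R] (h : IsLNZS R) :
    ∀ e : R, IsIdempotentElem e → ∀ r s : R, e * r * (1 - e) * s * e = 0 := by
  intro e he r s
  have key : e * (1 - e) = 0 := by simp [mul_sub, he.eq]
  have hnil : IsNilpotent ((1 - e) * s * e) := by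
    refine ⟨2, ?_⟩
    have : (1 - e) * s * e * ((1 - e) * s * e)
        = (1 - e) * s * (e * (1 - e)) * s * e := by noncomm_ring
    rw [sq, this, key]
    noncomm_ring
  obtain ⟨I, hI⟩ := h _ hnil
  have he' : e ∈ I := by
    rw [hI]
    have : e * ((1 - e) * s * e) = e * (1 - e) * (s * e) := by noncomm_ring
    rw [this, key, zero_mul]
  have := (hI _).mp (I.mul_mem_right e r he')
  have heq : e * r * (1 - e) * s * e = e * r * ((1 - e) * s * e) := by noncomm_ring
  rw [heq, this]
end

section
/- If R is an LNZS and semiprime ring, then R is reduced. -/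
theorem isLNZS_semiprime_isReduced (R : Type*) [Ring R] (h : IsLNZS R)
    (hsp : ∀ a : R, (∀ r : R, a * r * a = 0) → a = 0) : IsReduced R := by
  have key : ∀ a : R, a * a = 0 → a = 0 := by
    intro a ha
    obtain ⟨I, hI⟩ := h a ⟨2, by rw [sq]; exact ha⟩
    have haI : a ∈ I := (hI a).mpr ha
    refine hsp a (fun r => ?_)
    exact (hI (a * r)).mp (I.mul_mem_right _ _ haI)
  constructor
  intro x hx
  obtain ⟨n, hn⟩ := hx
  induction n with
  | zero => simpa using congrArg (· * x) hn
  | succ n ih =>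
    rcases Nat.eq_zero_or_pos n with h0 | hpos
    · subst h0; simpa using hn
    · apply ih
      have : (x ^ n) * (x ^ n) = 0 := by
        have : x ^ (n + 1) * x ^ (n - 1) = 0 := by rw [hn, zero_mul]
        calc x ^ n * x ^ n = x ^ (n + 1) * x ^ (n - 1) := by
              rw [← pow_add, ← pow_add]; congr 1; omega
          _ = 0 := this
      simpa using key _ this
end

section
/- A subdirect product of an arbitrary family of LNZS rings is LNZS: if {I_δ} is a family of two-sided ideals of R with ∩ I_δ = 0 and each R/I_δ is LNZS, then R is LNZS. -/
theorem subdirectProduct_isLNZS (R : Type*) [Ring R] {ι : Type*} (I : ι → TwoSidedIdeal R)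
    (h0 : ∀ x : R, (∀ δ : ι, x ∈ I δ) → x = 0)
    (h : ∀ δ : ι, IsLNZS (I δ).ringCon.Quotient) : IsLNZS R := by
  intro a ha
  have key : ∀ x r : R, x * a = 0 → x * r * a = 0 := by
    intro x r hx
    apply h0
    intro δ
    obtain ⟨J, hJ⟩ := h δ ((I δ).ringCon.mk' a) (ha.map ((I δ).ringCon.mk'))
    have hmem : ∀ y : R, y ∈ I δ ↔ (I δ).ringCon.mk' y = 0 := by
      intro y
      rw [(I δ).mem_iff]
      exact ⟨fun h' => Quotient.sound h', fun h' => Quotient.exact h'⟩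
    have hx' : (I δ).ringCon.mk' x ∈ J := by
      rw [hJ, ← map_mul, hx, map_zero]
    have := J.mul_mem_right _ ((I δ).ringCon.mk' r) hx'
    rw [hJ, ← map_mul, ← map_mul] at this
    exact (hmem _).2 this
  refine ⟨TwoSidedIdeal.mk' {x | x * a = 0} (by simp) (fun {x y} hx hy => by
      simp only [Set.mem_setOf_eq] at *; rw [add_mul, hx, hy, add_zero])
    (fun {x} hx => by simp only [Set.mem_setOf_eq] at *; rw [neg_mul, hx, neg_zero])
    (fun {x y} hy => by simp only [Set.mem_setOf_eq] at *; rw [mul_assoc, hy, mul_zero])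
    (fun {x y} hx => key _ _ hx), fun x => TwoSidedIdeal.mem_mk' _ _ _ _ _ _ _⟩
end

section
/- Let R be a ring and Δ a multiplicatively closed subset of R consisting of central non-zero-divisors. Then for u in Δ and a in R, the left annihilator of u^{-1} a in the localization Δ^{-1} R is an ideal if and only if the left annihilator of a in R is an ideal. -/
/-- A central submonoid of a ring is a left Ore set. -/
def centralOreSet {R : Type*} [Ring R] (Δ : Submonoid R)
    (hc : ∀ u ∈ Δ, ∀ r : R, u * r = r * u) : OreLocalization.OreSet Δ where
  ore_right_cancel r₁ r₂ s h := ⟨s, by rw [hc s.1 s.2 r₁, hc s.1 s.2 r₂, h]⟩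
  oreNum r _ := r
  oreDenom _ s := s
  ore_eq r s := hc s.1 s.2 r

section aux

variable {R : Type*} [Ring R] {Δ : Submonoid R} [OreLocalization.OreSet Δ]

lemma aux_mul (hc : ∀ u ∈ Δ, ∀ r : R, u * r = r * u) (r₁ r₂ : R) (s₁ s₂ : Δ) :
    (r₁ /ₒ s₁) * (r₂ /ₒ s₂) = (r₁ * r₂) /ₒ (s₂ * s₁) :=
  OreLocalization.oreDiv_mul_char r₁ r₂ s₁ s₂ r₁ s₂ (hc s₂.1 s₂.2 r₁)

lemma aux_zero (hc : ∀ u ∈ Δ, ∀ r : R, u * r = r * u)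
    (hnzd : ∀ u ∈ Δ, ∀ r : R, (r * u = 0 → r = 0) ∧ (u * r = 0 → r = 0))
    (r : R) (s : Δ) : r /ₒ s = 0 ↔ r = 0 := by
  constructor
  · intro h
    rw [OreLocalization.zero_def, OreLocalization.oreDiv_eq_iff] at h
    obtain ⟨t, v, h1, h2⟩ := h
    have h1' : v * r = 0 := by simpa [smul_eq_mul] using h1.symm
    have h2' : (t : R) = v * s := by simpa [mul_one] using h2
    have htr : (t : R) * r = 0 := by
      rw [h2', mul_assoc, hc s.1 s.2 r, ← mul_assoc, h1', zero_mul]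
    exact (hnzd t.1 t.2 r).2 htr
  · rintro rfl
    exact OreLocalization.zero_oreDiv' s

end aux

theorem leftAnn_localization_isIdeal_iff (R : Type*) [Ring R] (Δ : Submonoid R)
    (hc : ∀ u ∈ Δ, ∀ r : R, u * r = r * u)
    (hnzd : ∀ u ∈ Δ, ∀ r : R, (r * u = 0 → r = 0) ∧ (u * r = 0 → r = 0))
    (u : R) (hu : u ∈ Δ) (a : R) :
    letI := centralOreSet Δ hc
    ((∃ I : TwoSidedIdeal (OreLocalization Δ R),
        ∀ x : OreLocalization Δ R, x ∈ I ↔ x * (a /ₒ ⟨u, hu⟩) = 0) ↔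
      (∃ I : TwoSidedIdeal R, ∀ x : R, x ∈ I ↔ x * a = 0)) := by
  letI := centralOreSet Δ hc
  set c : OreLocalization Δ R := a /ₒ ⟨u, hu⟩ with hcdef
  -- key: (r /ₒ s) * c = 0 ↔ r * a = 0
  have key : ∀ (r : R) (s : Δ), (r /ₒ s) * c = 0 ↔ r * a = 0 := by
    intro r s
    rw [hcdef, aux_mul hc, aux_zero hc hnzd]
  constructor
  · rintro ⟨I, hI⟩
    refine ⟨TwoSidedIdeal.mk' {x | x * a = 0} (by simp) (fun {x y} hx hy => by
        simp only [Set.mem_setOf_eq] at *; rw [add_mul, hx, hy, add_zero])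
      (fun {x} hx => by simp only [Set.mem_setOf_eq] at *; rw [neg_mul, hx, neg_zero])
      (fun {x y} hy => by simp only [Set.mem_setOf_eq] at *; rw [mul_assoc, hy, mul_zero])
      (fun {x y} hx => ?_), fun x => by simp⟩
    simp only [Set.mem_setOf_eq] at *
    have hxI : (x /ₒ 1) ∈ I := (hI _).2 ((key x 1).2 hx)
    have := I.mul_mem_right _ (y /ₒ 1) hxI
    have h2 := (hI _).1 this
    rw [aux_mul hc] at h2
    exact (key (x * y) _).1 h2
  · rintro ⟨J, hJ⟩
    refine ⟨TwoSidedIdeal.mk' {x | x * c = 0} (by simp) (fun {x y} hx hy => by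
        simp only [Set.mem_setOf_eq] at *; rw [add_mul, hx, hy, add_zero])
      (fun {x} hx => by simp only [Set.mem_setOf_eq] at *; rw [neg_mul, hx, neg_zero])
      (fun {x y} hy => by simp only [Set.mem_setOf_eq] at *; rw [mul_assoc, hy, mul_zero])
      (fun {x y} hx => ?_), fun x => by simp⟩
    simp only [Set.mem_setOf_eq] at *
    induction x using OreLocalization.ind with | _ r s =>
    induction y using OreLocalization.ind with | _ r' s' =>
    have hr : r * a = 0 := (key r s).1 hx
    have hrJ : r ∈ J := (hJ r).2 hr
    have : r * r' ∈ J := J.mul_mem_right _ _ hrJ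
    have hrr' : (r * r') * a = 0 := (hJ _).1 this
    rw [aux_mul hc]
    exact (key (r * r') _).2 hrr'
end

section
/- The polynomial ring R[x] is LNZS if and only if the Laurent polynomial ring R[x, x^{-1}] is LNZS. -/
open LaurentPolynomial Polynomial

private lemma mul_T_swap {R : Type*} [Ring R] (f g : R[T;T⁻¹]) (n : ℤ) :
    f * T n * g = f * g * T n := by
  rw [mul_assoc, T_mul, ← mul_assoc]

private lemma mul_T_eq_zero {R : Type*} [Ring R] (b : R[T;T⁻¹]) (n : ℤ) :
    b * T n = 0 ↔ b = 0 :=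
  (isUnit_T (R := R) n).mul_left_eq_zero

theorem polynomial_isLNZS_iff_laurent (R : Type*) [Ring R] :
    IsLNZS (Polynomial R) ↔ IsLNZS (LaurentPolynomial R) := by
  constructor
  · intro h a ha
    obtain ⟨n, p, hp⟩ := a.exists_T_pow
    -- p is nilpotent
    have hpnil : IsNilpotent p := by
      obtain ⟨k, hk⟩ := ha
      refine ⟨k, toLaurent_injective ?_⟩
      rw [map_pow, hp, map_zero]
      rw [(commute_T (n : ℤ) a).symm.mul_pow, hk, zero_mul]
    obtain ⟨I, hI⟩ := h p hpnil
    -- key equivalence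
    have key : ∀ b : R[T;T⁻¹], b * a = 0 ↔ b * toLaurent p = 0 := by
      intro b
      rw [hp, ← mul_assoc, mul_T_eq_zero]
    refine ⟨TwoSidedIdeal.mk' {b | b * a = 0} (by simp) (fun {x y} hx hy => by
        simp only [Set.mem_setOf_eq] at *; rw [add_mul, hx, hy, add_zero])
      (fun {x} hx => by simp only [Set.mem_setOf_eq] at *; rw [neg_mul, hx, neg_zero])
      (fun {x y} hy => by simp only [Set.mem_setOf_eq] at *; rw [mul_assoc, hy, mul_zero])
      (fun {b c} hb => ?_), fun x => by rw [TwoSidedIdeal.mem_mk']; rfl⟩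
    simp only [Set.mem_setOf_eq] at *
    obtain ⟨m, q, hq⟩ := b.exists_T_pow
    obtain ⟨k, r, hr⟩ := c.exists_T_pow
    have hqI : q ∈ I := by
      rw [hI, ← toLaurent_eq_zero, map_mul, hq, mul_T_swap, (key b).mp hb, zero_mul]
    have hqr : (q * r) * p = 0 := (hI _).mp (I.mul_mem_right _ _ hqI)
    have : toLaurent ((q * r) * p) = 0 := by rw [hqr, map_zero]
    rw [map_mul, map_mul, hq, hr] at this
    rw [mul_T_swap b (c * T (k : ℤ)) (m : ℤ),
      mul_T_swap (b * (c * T (k : ℤ))) (toLaurent p) (m : ℤ),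
      ← mul_assoc b c (T (k : ℤ)), mul_T_swap (b * c) (toLaurent p) (k : ℤ),
      mul_T_eq_zero, mul_T_eq_zero] at this
    exact (key _).mpr this
  · intro h p hp
    have : IsNilpotent (toLaurent p) := hp.map _
    obtain ⟨J, hJ⟩ := h _ this
    refine ⟨TwoSidedIdeal.mk' {q | q * p = 0} (by simp) (fun {x y} hx hy => by
        simp only [Set.mem_setOf_eq] at *; rw [add_mul, hx, hy, add_zero])
      (fun {x} hx => by simp only [Set.mem_setOf_eq] at *; rw [neg_mul, hx, neg_zero])
      (fun {x y} hy => by simp only [Set.mem_setOf_eq] at *; rw [mul_assoc, hy, mul_zero])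
      (fun {q r} hq => ?_), fun x => by rw [TwoSidedIdeal.mem_mk']; rfl⟩
    simp only [Set.mem_setOf_eq] at *
    have hqJ : toLaurent q ∈ J := by rw [hJ, ← map_mul, hq, map_zero]
    have := (hJ _).mp (J.mul_mem_right _ (toLaurent r) hqJ)
    rw [← map_mul, ← map_mul, toLaurent_eq_zero] at this
    exact this
end

section
/- Let α be an endomorphism of a ring R satisfying the α-condition. If R is an LNZS ring, then N(R[x; α]) = N(R)[x; α], i.e., a skew polynomial is nilpotent if and only if all of its coefficients are nilpotent. -/
/-- The element of `S` represented by the finitely supported coefficient family `f`,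
namely `∑ i, φ (f i) * x ^ i`. -/
def toSkewPoly {R S : Type*} [Ring R] [Ring S] (φ : R →+* S) (x : S) (f : ℕ →₀ R) : S :=
  f.sum fun i a => φ a * x ^ i

/-- `S` is the skew polynomial ring `R[x; α]`: `R` embeds via `φ`, the indeterminate `x`
satisfies `x * w = α w * x`, and every element of `S` is uniquely of the form
`∑ i, φ (a i) * x ^ i`. -/
structure IsSkewPolynomialRing {R S : Type*} [Ring R] [Ring S]
    (α : R →+* R) (φ : R →+* S) (x : S) : Prop where
  skew_comm : ∀ w : R, x * φ w = φ (α w) * x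
  repr_surj : ∀ s : S, ∃ f : ℕ →₀ R, toSkewPoly φ x f = s
  repr_indep : ∀ f : ℕ →₀ R, toSkewPoly φ x f = 0 → f = 0

/-- The `α`-condition: `a * b = 0` iff `a * α b = 0`. -/
def AlphaCondition {R : Type*} [Ring R] (α : R →+* R) : Prop :=
  ∀ a b : R, a * b = 0 ↔ a * α b = 0


set_option linter.unusedSectionVars false

theorem firstOcc {α : Type*} [DecidableEq α] {a : α} :
    ∀ {L : List α}, a ∈ L → ∃ P T, L = P ++ a :: T ∧ a ∉ P := by
  intro L hL
  induction L with
  | nil => simp at hL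
  | cons c T ih =>
    by_cases hc : c = a
    · exact ⟨[], T, by simp [hc], by simp⟩
    · have : a ∈ T := by
        rcases List.mem_cons.mp hL with h | h
        · exact absurd h.symm hc
        · exact h
      obtain ⟨P, T', hPT, hnP⟩ := ih this
      exact ⟨c :: P, T', by simp [hPT], by simp [hnP]; exact fun h => hc h.symm⟩

theorem lastOcc {α : Type*} [DecidableEq α] {a : α} {L : List α} (hL : a ∈ L) :
    ∃ P T, L = P ++ a :: T ∧ a ∉ T := by
  have : a ∈ L.reverse := by simpa using hL
  obtain ⟨P, T, hPT, hnP⟩ := firstOcc this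
  refine ⟨T.reverse, P.reverse, ?_, by simpa using hnP⟩
  have := congrArg List.reverse hPT
  simpa using this

section LB
variable {R : Type*} [Ring R] [DecidableEq R]

omit [DecidableEq R] in
/-- identity: ((a*r)*a)^(s+1) = a * (r * (((a*a)*r)^s * a)) -/
theorem id1 (a r : R) : ∀ s : ℕ, ((a*r)*a)^(s+1) = a * (r * (((a*a)*r)^s * a))
  | 0 => by simp [mul_assoc]
  | (s+1) => by
    rw [pow_succ, id1 a r s, pow_succ]
    simp [mul_assoc]

omit [DecidableEq R] in
theorem mulpow_as_prod (u v : R) : ∀ s : ℕ,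
    (u*v)^s = (List.flatten (List.replicate s [u, v])).prod
  | 0 => by simp
  | (s+1) => by
    rw [List.replicate_succ, List.flatten_cons, List.prod_append, ← mulpow_as_prod u v s,
      pow_succ']
    simp [mul_assoc]

theorem count_mulpow_list (u v : R) : ∀ s : ℕ,
    s ≤ (List.flatten (List.replicate s [u, v])).count u
  | 0 => by simp
  | (s+1) => by
    rw [List.replicate_succ, List.flatten_cons, List.count_append]
    have h1 : 1 ≤ List.count u [u, v] := by simp [List.count_cons]
    have := count_mulpow_list u v s
    omega

theorem LB (h : IsLNZS R) : ∀ n (a : R), a^n = 0 → ∀ L : List R, n ≤ L.count a → L.prod = 0 := by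
  intro n
  induction n using Nat.strong_induction_on with
  | _ n IH =>
  match n, IH with
  | 0, _ =>
    intro a ha L _
    have h1 : (1 : R) = 0 := by simpa using ha
    calc L.prod = L.prod * 1 := by rw [mul_one]
    _ = 0 := by rw [h1, mul_zero]
  | 1, _ =>
    intro a ha L hcount
    have ha' : a = 0 := by simpa using ha
    have : a ∈ L := List.count_pos_iff.mp (by omega)
    exact List.prod_eq_zero (ha' ▸ this)
  | (nn+2), IH =>
  intro a ha L hcount
  set n' := nn + 2 with hn'
  set m := (n' + 1) / 2 with hm
  have hmlt : m < n' := by omega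
  have hb : (a*a)^m = 0 := by
    have key : a^(2*m) = a ^ n' * a^(2*m - n') := by
      rw [← pow_add]
      congr 1
      omega
    calc (a*a)^m = a^(2*m) := by rw [← pow_two, ← pow_mul]
    _ = 0 := by rw [key, ha, zero_mul]
  have IHB : ∀ L : List R, m ≤ L.count (a*a) → L.prod = 0 := IH m hmlt (a*a) hb
  have nu : ∀ r : R, IsNilpotent ((a*r)*a) := by
    intro r
    refine ⟨m+1, ?_⟩
    rw [id1]
    have hz : (((a*a)*r))^m = 0 := by
      rw [mulpow_as_prod]
      exact IHB _ (count_mulpow_list _ _ m)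
    rw [hz, zero_mul, mul_zero, mul_zero]
  have M : ∀ len (L : List R), L.length ≤ len → ∀ k (z : R),
      n' ≤ k + L.count a + 1 → z * (a^k * (L.prod * a)) = 0 := by
    intro len
    induction len with
    | zero =>
      intro L hL k z hcond
      have hLnil : L = [] := List.eq_nil_of_length_eq_zero (by omega)
      subst hLnil
      simp only [List.count_nil] at hcond
      by_cases hk : n' ≤ k
      · have hak : a ^ k = 0 := by
          have hkk : k = n' + (k - n') := by omega
          rw [hkk, pow_add, ha, zero_mul]
        simp [hak]
      · have hk1 : k + 1 = n' := by omega
        have haa : a^k * a = 0 := by rw [← pow_succ, hk1, ha]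
        simp only [List.prod_nil, one_mul]
        rw [haa, mul_zero]
    | succ len ih =>
      intro L hL k z hcond
      by_cases hk : n' ≤ k
      · have hak : a ^ k = 0 := by
          have hkk : k = n' + (k - n') := by omega
          rw [hkk, pow_add, ha, zero_mul]
        simp [hak]
      by_cases hk1 : k + 1 = n'
      · obtain ⟨I, hI⟩ := h a ⟨n', ha⟩
        have h1 : a^k ∈ I := (hI _).mpr (by rw [← pow_succ, hk1, ha])
        have h2 : (z * a^k) * L.prod ∈ I :=
          I.mul_mem_right _ _ (I.mul_mem_left _ _ h1)
        have h3 := (hI _).mp h2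
        calc z * (a^k * (L.prod * a)) = ((z * a^k) * L.prod) * a := by simp [mul_assoc]
        _ = 0 := h3
      have hk2 : k + 2 ≤ n' := by omega
      have hmemL : a ∈ L := List.count_pos_iff.mp (by omega)
      cases L with
      | nil => simp at hmemL
      | cons c T =>
      by_cases hc : c = a
      · rw [hc] at hcond ⊢
        have hcnt : (a :: T).count a = T.count a + 1 := by simp
        have key := ih T (by simp at hL; omega) (k+1) z (by rw [hcnt] at hcond; omega)
        calc z * (a^k * ((a :: T).prod * a)) = z * (a^(k+1) * (T.prod * a)) := by
              rw [List.prod_cons, pow_succ]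
              simp [mul_assoc]
        _ = 0 := key
      · have hmemT : a ∈ T := by
          rcases List.mem_cons.mp hmemL with h' | h'
          · exact absurd h'.symm hc
          · exact h'
        obtain ⟨P, T', hPT, hnP⟩ := firstOcc hmemT
        have hcntP : P.count a = 0 := List.count_eq_zero.mpr hnP
        have hcntL : (c :: T).count a = T'.count a + 1 := by
          subst hPT
          simp [List.count_cons, List.count_append, hcntP, hc]
        have hlenT' : T'.length ≤ len := by
          subst hPT
          simp [List.length_append] at hL
          omega
        set W := a * (T'.prod * a) with hWdef
        have hW0 : a^k * W = 0 := by
          have key := ih T' hlenT' (k+1) 1 (by rw [hcntL] at hcond; omega)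
          rw [one_mul] at key
          calc a^k * W = a^(k+1) * (T'.prod * a) := by rw [pow_succ]; simp [mul_assoc, hWdef]
          _ = 0 := key
        have hWnil : IsNilpotent W := by
          have hnu := nu T'.prod
          have hassoc : (a * T'.prod) * a = W := by rw [hWdef, mul_assoc]
          rwa [hassoc] at hnu
        obtain ⟨I, hI⟩ := h W hWnil
        have h1 : a^k ∈ I := (hI _).mpr hW0
        have h2 : z * ((a^k) * (c * P.prod)) ∈ I :=
          I.mul_mem_left _ _ (I.mul_mem_right _ _ h1)
        have h3 := (hI _).mp h2
        calc z * (a^k * ((c :: T).prod * a))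
            = (z * (a^k * (c * P.prod))) * W := by
              subst hPT
              rw [List.prod_cons, List.prod_append, List.prod_cons]
              simp [mul_assoc, hWdef]
        _ = 0 := h3
  have hmemL : a ∈ L := List.count_pos_iff.mp (by omega)
  obtain ⟨P, T, hPT, hnT⟩ := lastOcc hmemL
  have hcntT : T.count a = 0 := List.count_eq_zero.mpr hnT
  have hcntP : n' ≤ 0 + P.count a + 1 := by
    subst hPT
    simp [List.count_append, List.count_cons, hcntT] at hcount
    omega
  have key := M P.length P le_rfl 0 1 hcntP
  rw [one_mul, pow_zero, one_mul] at key
  subst hPT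
  rw [List.prod_append, List.prod_cons, ← mul_assoc, key, zero_mul]

end LB

section Infra
variable {R S : Type*} [Ring R] [Ring S]

def itr (α : R →+* R) : ℕ → R →+* R
  | 0 => RingHom.id R
  | (e+1) => (itr α e).comp α

theorem itr_succ_apply (α : R →+* R) (e : ℕ) (z : R) :
    itr α (e+1) z = itr α e (α z) := rfl

theorem untiff {α : R →+* R} (hα : AlphaCondition α) :
    ∀ (e : ℕ) (c z : R), c * itr α e z = 0 ↔ c * z = 0 := by
  intro e
  induction e with
  | zero => intro c z; rfl
  | succ e ih =>
    intro c z
    rw [itr_succ_apply, ih c (α z), ← hα]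

noncomputable def mulC (α : R →+* R) (F G : ℕ →₀ R) : ℕ →₀ R :=
  F.sum fun i a => G.sum fun j b => Finsupp.single (i+j) (a * itr α i b)

theorem mulC_apply (α : R →+* R) (F G : ℕ →₀ R) (k : ℕ) :
    (mulC α F G) k = ∑ i ∈ F.support, ∑ j ∈ G.support,
      (if i + j = k then F i * itr α i (G j) else 0) := by
  simp only [mulC, Finsupp.sum_apply, Finsupp.sum, Finset.sum_apply', Finsupp.single_apply]

noncomputable def oneC : ℕ →₀ R := Finsupp.single 0 1

theorem mulC_oneC (α : R →+* R) (F : ℕ →₀ R) : mulC α F oneC = F := by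
  rw [mulC]
  have hinner : ∀ i (a : R), (oneC.sum fun j b => Finsupp.single (i+j) (a * itr α i b))
      = Finsupp.single i a := by
    intro i a
    rw [oneC, Finsupp.sum_single_index]
    · rw [map_one, mul_one, add_zero]
    · rw [map_zero, mul_zero, Finsupp.single_zero]
  calc (F.sum fun i a => oneC.sum fun j b => Finsupp.single (i+j) (a * itr α i b))
      = F.sum fun i a => Finsupp.single i a := by
        refine Finsupp.sum_congr fun i _ => hinner i (F i)
  _ = F := Finsupp.sum_single F

noncomputable def mulCList (α : R →+* R) : List (ℕ →₀ R) → (ℕ →₀ R)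
  | [] => oneC
  | (G :: Gs) => mulC α G (mulCList α Gs)

noncomputable def TSPhom (φ : R →+* S) (x : S) : (ℕ →₀ R) →+ S :=
  Finsupp.liftAddHom (fun i => (AddMonoidHom.mulRight (x^i)).comp φ.toAddMonoidHom)

theorem TSPhom_eq (φ : R →+* S) (x : S) (F : ℕ →₀ R) :
    TSPhom φ x F = toSkewPoly φ x F := by
  rw [TSPhom, Finsupp.liftAddHom_apply, toSkewPoly]
  rfl

theorem tsp_injective {α : R →+* R} {φ : R →+* S} {x : S}
    (hS : IsSkewPolynomialRing α φ x) : Function.Injective (toSkewPoly φ x) := by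
  intro F G hFG
  have h0 : toSkewPoly φ x (F - G) = 0 := by
    rw [← TSPhom_eq, map_sub, TSPhom_eq, TSPhom_eq, hFG, sub_self]
  have := hS.repr_indep _ h0
  exact sub_eq_zero.mp this

theorem itr_alpha (α : R →+* R) : ∀ (i : ℕ) (b : R), α (itr α i b) = itr α (i+1) b := by
  intro i
  induction i with
  | zero => intro b; rfl
  | succ i ih =>
    intro b
    rw [itr_succ_apply, itr_succ_apply, ih (α b)]

theorem xpow_phi {α : R →+* R} {φ : R →+* S} {x : S}
    (hS : IsSkewPolynomialRing α φ x) :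
    ∀ (i : ℕ) (b : R), x^i * φ b = φ (itr α i b) * x^i := by
  intro i
  induction i with
  | zero => intro b; simp [itr]
  | succ i ih =>
    intro b
    calc x^(i+1) * φ b = x * (x^i * φ b) := by rw [pow_succ', mul_assoc]
    _ = x * (φ (itr α i b) * x^i) := by rw [ih]
    _ = (x * φ (itr α i b)) * x^i := by rw [mul_assoc]
    _ = (φ (α (itr α i b)) * x) * x^i := by rw [hS.skew_comm]
    _ = φ (α (itr α i b)) * (x * x^i) := by rw [mul_assoc]
    _ = φ (itr α (i+1) b) * x^(i+1) := by rw [itr_alpha, pow_succ']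

theorem tsp_single (φ : R →+* S) (x : S) (i : ℕ) (a : R) :
    toSkewPoly φ x (Finsupp.single i a) = φ a * x^i := by
  rw [toSkewPoly, Finsupp.sum_single_index]
  rw [map_zero, zero_mul]

theorem tsp_mulC {α : R →+* R} {φ : R →+* S} {x : S}
    (hS : IsSkewPolynomialRing α φ x) (F G : ℕ →₀ R) :
    toSkewPoly φ x (mulC α F G) = toSkewPoly φ x F * toSkewPoly φ x G := by
  rw [← TSPhom_eq, mulC]
  rw [Finsupp.sum, map_sum]
  have step : ∀ i ∈ F.support, (TSPhom φ x) (G.sum fun j b => Finsupp.single (i+j) (F i * itr α i b))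
      = (φ (F i) * x^i) * toSkewPoly φ x G := by
    intro i _
    rw [Finsupp.sum, map_sum]
    rw [toSkewPoly, Finsupp.sum, Finset.mul_sum]
    refine Finset.sum_congr rfl fun j _ => ?_
    rw [TSPhom_eq, tsp_single, map_mul, pow_add]
    calc φ (F i) * φ (itr α i (G j)) * (x^i * x^j)
        = φ (F i) * ((φ (itr α i (G j)) * x^i) * x^j) := by simp [mul_assoc]
    _ = φ (F i) * ((x^i * φ (G j)) * x^j) := by rw [xpow_phi hS]
    _ = φ (F i) * x ^ i * (φ (G j) * x ^ j) := by simp [mul_assoc]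
  rw [Finset.sum_congr rfl step]
  have hfin : toSkewPoly φ x F * toSkewPoly φ x G
      = ∑ i ∈ F.support, φ (F i) * x ^ i * toSkewPoly φ x G := by
    rw [toSkewPoly]
    rw [Finsupp.sum, Finset.sum_mul]
  rw [hfin]

theorem tsp_oneC (φ : R →+* S) (x : S) : toSkewPoly φ x (oneC : ℕ →₀ R) = 1 := by
  rw [oneC, tsp_single, map_one, pow_zero, one_mul]

theorem tsp_mulCList {α : R →+* R} {φ : R →+* S} {x : S}
    (hS : IsSkewPolynomialRing α φ x) :
    ∀ Gs : List (ℕ →₀ R), toSkewPoly φ x (mulCList α Gs) = (Gs.map (toSkewPoly φ x)).prod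
  | [] => by rw [mulCList, tsp_oneC, List.map_nil, List.prod_nil]
  | (G :: Gs) => by
    rw [mulCList, tsp_mulC hS, tsp_mulCList hS Gs, List.map_cons, List.prod_cons]

noncomputable def powC (α : R →+* R) (F : ℕ →₀ R) (M : ℕ) : ℕ →₀ R :=
  mulCList α (List.replicate M F)

theorem tsp_powC {α : R →+* R} {φ : R →+* S} {x : S}
    (hS : IsSkewPolynomialRing α φ x) (F : ℕ →₀ R) (M : ℕ) :
    toSkewPoly φ x (powC α F M) = (toSkewPoly φ x F)^M := by
  rw [powC, tsp_mulCList hS, List.map_replicate, List.prod_replicate]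

theorem master {α : R →+* R} (hα : AlphaCondition α) :
    ∀ (Gs : List (ℕ →₀ R)) (c : R),
    (∀ js : List ℕ, js.length = Gs.length →
      c * (List.zipWith (fun (G : ℕ →₀ R) j => G j) Gs js).prod = 0) →
    ∀ (e k : ℕ), c * itr α e ((mulCList α Gs) k) = 0 := by
  intro Gs
  induction Gs with
  | nil =>
    intro c hyp e k
    have hc : c = 0 := by
      have := hyp [] rfl
      simpa using this
    rw [hc, zero_mul]
  | cons G Gs ih =>
    intro c hyp e k
    rw [mulCList, mulC_apply, map_sum, Finset.mul_sum]
    refine Finset.sum_eq_zero fun i _ => ?_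
    rw [map_sum, Finset.mul_sum]
    refine Finset.sum_eq_zero fun j _ => ?_
    by_cases hij : i + j = k
    · rw [if_pos hij]
      rw [untiff hα]
      rw [← mul_assoc]
      refine ih (c * G i) (fun js hjs => ?_) i j
      have := hyp (i :: js) (by simp [hjs])
      rw [List.zipWith_cons_cons, List.prod_cons, ← mul_assoc] at this
      exact this
    · rw [if_neg hij, map_zero, mul_zero]

end Infra

section C4
variable {R S : Type*} [Ring R] [Ring S]

theorem bd_mulC (α : R →+* R) {F G : ℕ →₀ R} {K1 K2 : ℕ}
    (h1 : ∀ k, K1 < k → F k = 0) (h2 : ∀ k, K2 < k → G k = 0) :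
    ∀ k, K1 + K2 < k → mulC α F G k = 0 := by
  intro k hk
  rw [mulC_apply]
  refine Finset.sum_eq_zero fun i hi => Finset.sum_eq_zero fun j hj => ?_
  have hiK : i ≤ K1 := by
    by_contra hcon
    exact (Finsupp.mem_support_iff.mp hi) (h1 i (by omega))
  have hjK : j ≤ K2 := by
    by_contra hcon
    exact (Finsupp.mem_support_iff.mp hj) (h2 j (by omega))
  rw [if_neg (by omega)]

theorem powC_succ (α : R →+* R) (F : ℕ →₀ R) (M : ℕ) :
    powC α F (M+1) = mulC α F (powC α F M) := by
  rw [powC, List.replicate_succ, mulCList, powC]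

theorem powC_bd (α : R →+* R) {F : ℕ →₀ R} {D : ℕ} (hD : ∀ k, D < k → F k = 0) :
    ∀ M k, D * M < k → powC α F M k = 0 := by
  intro M
  induction M with
  | zero =>
    intro k hk
    rw [powC, List.replicate, mulCList, oneC, Finsupp.single_apply, if_neg (by omega)]
  | succ M ih =>
    intro k hk
    rw [powC_succ]
    refine bd_mulC α hD ih k (by rw [Nat.mul_succ] at hk; omega)

theorem topc (α : R →+* R) (F : ℕ →₀ R) (hne : F.support.Nonempty) :
    ∀ M, powC α F (M+1) (F.support.max' hne * (M+1))
      = F (F.support.max' hne) * itr α (F.support.max' hne) (powC α F M (F.support.max' hne * M)) := by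
  intro M
  set D := F.support.max' hne with hD
  have hDmem : D ∈ F.support := F.support.max'_mem hne
  have hDbd : ∀ k, D < k → F k = 0 := by
    intro k hk
    by_contra hcon
    have := F.support.le_max' k (Finsupp.mem_support_iff.mpr hcon)
    omega
  rw [powC_succ, mulC_apply]
  rw [Finset.sum_eq_single_of_mem D hDmem]
  · have : ∀ j ∈ (powC α F M).support,
        (if D + j = D * (M+1) then F D * itr α D ((powC α F M) j) else 0)
        = (if j = D * M then F D * itr α D ((powC α F M) j) else 0) := by
      intro j _
      have hmul : D * (M+1) = D * M + D := by ring
      congr 1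
      · simp only [eq_iff_iff]
        constructor
        · intro hj; omega
        · intro hj; omega
    rw [Finset.sum_congr rfl this, Finset.sum_ite_eq' (powC α F M).support (D * M)]
    by_cases hmem : D * M ∈ (powC α F M).support
    · rw [if_pos hmem]
    · rw [if_neg hmem]
      rw [Finsupp.notMem_support_iff.mp hmem, map_zero, mul_zero]
  · intro i hi hne'
    refine Finset.sum_eq_zero fun j hj => ?_
    have hiD : i ≤ D := F.support.le_max' i hi
    have hjD : (powC α F M) j ≠ 0 := Finsupp.mem_support_iff.mp hj
    have hmul : D * (M+1) = D * M + D := by ring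
    have hjbd : j ≤ D * M := by
      by_contra hcon
      exact hjD (powC_bd α hDbd M j (by omega))
    rw [if_neg (by omega)]

theorem lead_ext {α : R →+* R} (hα : AlphaCondition α) (F : ℕ →₀ R) (hne : F.support.Nonempty) :
    ∀ (M : ℕ) (c : R), c * powC α F (M+1) (F.support.max' hne * (M+1)) = 0 →
      c * (F (F.support.max' hne))^(M+1) = 0 := by
  intro M
  set D := F.support.max' hne with hD
  induction M with
  | zero =>
    intro c hc
    rw [topc α F hne 0] at hc
    rw [powC, List.replicate, mulCList, oneC] at hc
    have hz : D * 0 = 0 := by ring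
    rw [hz, Finsupp.single_apply, if_pos rfl, map_one, mul_one] at hc
    rw [pow_one]
    exact hc
  | succ M ih =>
    intro c hc
    rw [topc α F hne (M+1), ← mul_assoc, untiff hα] at hc
    have := ih (c * F D) hc
    rw [pow_succ']
    rw [← mul_assoc]
    exact this

theorem tsp_zero (φ : R →+* S) (x : S) : toSkewPoly φ x (0 : ℕ →₀ R) = 0 := by
  rw [← TSPhom_eq, map_zero]

theorem tsp_add (φ : R →+* S) (x : S) (F G : ℕ →₀ R) :
    toSkewPoly φ x (F + G) = toSkewPoly φ x F + toSkewPoly φ x G := by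
  rw [← TSPhom_eq, map_add, TSPhom_eq, TSPhom_eq]

-- pigeonhole helpers
theorem countsum {ι : Type*} [DecidableEq ι] (s : Finset ι) :
    ∀ l : List ι, (∀ x ∈ l, x ∈ s) → ∑ i ∈ s, l.count i = l.length := by
  intro l
  induction l with
  | nil => simp
  | cons b l ih =>
    intro hmem
    have hb : b ∈ s := hmem b (by simp)
    have hl : ∀ x ∈ l, x ∈ s := fun x hx => hmem x (by simp [hx])
    have : ∀ i ∈ s, List.count i (b :: l) = List.count i l + if i = b then 1 else 0 := by
      intro i _
      rw [List.count_cons]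
      by_cases hib : b = i
      · simp [hib]
      · have hbi : ¬ i = b := fun h => hib h.symm
        simp [hib, hbi]
    rw [Finset.sum_congr rfl this, Finset.sum_add_distrib, ih hl,
      Finset.sum_ite_eq' s b, if_pos hb, List.length_cons]

theorem pigeon {ι : Type*} [DecidableEq ι] (s : Finset ι) (N : ι → ℕ) (l : List ι)
    (hl : ∀ x ∈ l, x ∈ s) (hlen : ∑ i ∈ s, (N i - 1) < l.length) :
    ∃ i ∈ s, N i ≤ l.count i := by
  by_contra hcon
  push_neg at hcon
  have : ∑ i ∈ s, l.count i ≤ ∑ i ∈ s, (N i - 1) :=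
    Finset.sum_le_sum fun i hi => by have := hcon i hi; omega
  rw [countsum s l hl] at this
  omega

theorem zipWith_replicate_eq (F : ℕ →₀ R) :
    ∀ js : List ℕ, List.zipWith (fun (G : ℕ →₀ R) j => G j) (List.replicate js.length F) js
      = js.map fun j => F j := by
  intro js
  induction js with
  | nil => rfl
  | cons j js ih => rw [List.length_cons, List.replicate_succ, List.zipWith_cons_cons, ih, List.map_cons]

end C4

section C5
variable {R S : Type*} [Ring R] [Ring S]

theorem easy_dir [DecidableEq R] {α : R →+* R} {φ : R →+* S} {x : S}
    (hS : IsSkewPolynomialRing α φ x) (hα : AlphaCondition α) (h : IsLNZS R)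
    (F : ℕ →₀ R) (hnil : ∀ i, IsNilpotent (F i)) :
    IsNilpotent (toSkewPoly φ x F) := by
  have hN : ∀ i, (F i)^((hnil i).choose) = 0 := fun i => (hnil i).choose_spec
  set N : ℕ → ℕ := fun i => (hnil i).choose with hNdef
  set M := (∑ i ∈ F.support, (N i - 1)) + 1 with hM
  have hprod : ∀ js : List ℕ, js.length = M → (js.map fun j => F j).prod = 0 := by
    intro js hjs
    by_cases hall : ∀ j ∈ js, j ∈ F.support
    · obtain ⟨i, hi, hcnt⟩ := pigeon F.support N js hall (by omega)
      refine LB h (N i) (F i) (hN i) _ ?_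
      calc N i ≤ js.count i := hcnt
      _ ≤ (js.map fun j => F j).count (F i) := List.count_le_count_map
    · push_neg at hall
      obtain ⟨j, hj, hjn⟩ := hall
      exact List.prod_eq_zero
        (List.mem_map.mpr ⟨j, hj, Finsupp.notMem_support_iff.mp hjn⟩)
  have hyp : ∀ js : List ℕ, js.length = (List.replicate M (F : ℕ →₀ R)).length →
      (1:R) * (List.zipWith (fun (G : ℕ →₀ R) j => G j) (List.replicate M F) js).prod = 0 := by
    intro js hjs
    rw [List.length_replicate] at hjs
    rw [one_mul, show (List.replicate M (F : ℕ →₀ R)) = List.replicate js.length F by rw [hjs],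
      zipWith_replicate_eq]
    exact hprod js hjs
  have hpow : powC α F M = 0 := by
    refine Finsupp.ext fun k => ?_
    have := master hα (List.replicate M F) 1 hyp 0 k
    simpa [itr, powC] using this
  exact ⟨M, by rw [← tsp_powC hS, hpow, tsp_zero]⟩

theorem expandL (p q : S) : ∀ M : ℕ, ∃ ws : List (List Bool),
    (∀ w ∈ ws, w.length = M) ∧
    (p + q)^M = (ws.map fun w => (w.map fun b => if b then p else q).prod).sum := by
  intro M
  induction M with
  | zero => exact ⟨[[]], by simp, by simp⟩
  | succ M ih =>
    obtain ⟨ws, hlen, hrep⟩ := ih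
    refine ⟨ws.map (fun w => true :: w) ++ ws.map (fun w => false :: w), ?_, ?_⟩
    · intro w hw
      rcases List.mem_append.mp hw with hmem | hmem <;>
        obtain ⟨w', hw', rfl⟩ := List.mem_map.mp hmem <;> simp [hlen w' hw']
    · rw [pow_succ', hrep, List.map_append, List.sum_append, List.map_map, List.map_map]
      have h1 : ((fun w : List Bool => ((w.map fun b => if b then p else q)).prod) ∘ (fun w => true :: w))
          = fun w : List Bool => p * ((w.map fun b => if b then p else q)).prod := by
        funext w; simp
      have h2 : ((fun w : List Bool => ((w.map fun b => if b then p else q)).prod) ∘ (fun w => false :: w))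
          = fun w : List Bool => q * ((w.map fun b => if b then p else q)).prod := by
        funext w; simp
      rw [h1, h2, add_mul]
      rw [← List.sum_map_mul_left, ← List.sum_map_mul_left]

theorem lemD [DecidableEq R] [DecidableEq S] {α : R →+* R} {φ : R →+* S} {x : S}
    (hS : IsSkewPolynomialRing α φ x) (hα : AlphaCondition α) (h : IsLNZS R)
    (p : S) (hp : IsNilpotent p) (H : ℕ →₀ R) (hH : ∀ i, IsNilpotent (H i)) :
    IsNilpotent (p + toSkewPoly φ x H) := by
  set q := toSkewPoly φ x H with hq
  have hNH : ∀ i, (H i)^((hH i).choose) = 0 := fun i => (hH i).choose_spec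
  set NH : ℕ → ℕ := fun i => (hH i).choose with hNHdef
  set T := (∑ i ∈ H.support, (NH i - 1)) + 1 with hT
  choose rep hrep using hS.repr_surj
  -- core: products of T factors each ending in q vanish
  have coreE : ∀ ss : List S, T ≤ ss.length → (ss.map (fun s => s * q)).prod = 0 := by
    intro ss hss
    set Gs := (ss.map fun s => [rep s, H]).flatten with hGs
    have hTSP : ∀ ss : List S,
        toSkewPoly φ x (mulCList α ((ss.map fun s => [rep s, H]).flatten))
          = (ss.map fun s => s * q).prod := by
      intro ss
      induction ss with
      | nil =>
        rw [List.map_nil, List.flatten_nil, List.map_nil, List.prod_nil]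
        rw [mulCList, tsp_oneC]
      | cons s ss ih =>
        rw [List.map_cons, List.flatten_cons]
        rw [show ([rep s, H] ++ (ss.map fun s => [rep s, H]).flatten)
            = rep s :: H :: (ss.map fun s => [rep s, H]).flatten from rfl]
        rw [mulCList, mulCList, tsp_mulC hS, tsp_mulC hS, ih, hrep s, ← hq]
        rw [List.map_cons, List.prod_cons, mul_assoc]
    have hsub : ∀ (ss : List S) (js : List ℕ),
        js.length = ((ss.map fun s => [rep s, H]).flatten).length →
        ∃ hjs : List ℕ, hjs.length = ss.length ∧
          List.Sublist (hjs.map fun j => H j)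
            (List.zipWith (fun (G : ℕ →₀ R) j => G j) ((ss.map fun s => [rep s, H]).flatten) js) := by
      intro ss
      induction ss with
      | nil => intro js _; exact ⟨[], rfl, List.nil_sublist _⟩
      | cons s ss ih =>
        intro js hlen
        match js with
        | [] => simp at hlen
        | [j1] => simp at hlen
        | (j1 :: j2 :: js') =>
          rw [List.map_cons, List.flatten_cons] at hlen ⊢
          rw [show ([rep s, H] ++ (ss.map fun s => [rep s, H]).flatten)
              = rep s :: H :: (ss.map fun s => [rep s, H]).flatten from rfl] at hlen ⊢
          simp only [List.length_cons] at hlen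
          obtain ⟨hjs, hl, hsl⟩ := ih js' (by omega)
          refine ⟨j2 :: hjs, by simp [hl], ?_⟩
          rw [List.zipWith_cons_cons, List.zipWith_cons_cons, List.map_cons]
          exact (List.Sublist.cons₂ _ hsl).cons _
    have hyp : ∀ js : List ℕ, js.length = Gs.length →
        (1:R) * (List.zipWith (fun (G : ℕ →₀ R) j => G j) Gs js).prod = 0 := by
      intro js hjs
      rw [one_mul]
      obtain ⟨hjs', hl, hsl⟩ := hsub ss js hjs
      by_cases hall : ∀ j ∈ hjs', j ∈ H.support
      · obtain ⟨i, hi, hcnt⟩ := pigeon H.support NH hjs' hall (by omega)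
        refine LB h (NH i) (H i) (hNH i) _ ?_
        calc NH i ≤ hjs'.count i := hcnt
        _ ≤ (hjs'.map fun j => H j).count (H i) := List.count_le_count_map
        _ ≤ _ := hsl.count_le _
      · push_neg at hall
        obtain ⟨j, hj, hjn⟩ := hall
        refine List.prod_eq_zero (hsl.subset ?_)
        exact List.mem_map.mpr ⟨j, hj, Finsupp.notMem_support_iff.mp hjn⟩
    have hcoef : mulCList α Gs = 0 := by
      refine Finsupp.ext fun k => ?_
      have := master hα Gs 1 hyp 0 k
      simpa [itr] using this
    rw [← hTSP ss, ← hGs, hcoef, tsp_zero]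
  -- decomposition by count of q
  have DEC : ∀ (t : ℕ) (L : List S), t ≤ L.count q → ∃ (ss : List S) (rest : S),
      L.prod = (ss.map fun s => s * q).prod * rest ∧ ss.length = t := by
    intro t
    induction t with
    | zero => intro L _; exact ⟨[], L.prod, by simp, rfl⟩
    | succ t ih =>
      intro L hcnt
      have hqL : q ∈ L := List.count_pos_iff.mp (by omega)
      obtain ⟨P, T', hPT, hnP⟩ := firstOcc hqL
      have hcP : P.count q = 0 := List.count_eq_zero.mpr hnP
      have hcnt' : t ≤ T'.count q := by
        subst hPT
        simp [List.count_append, hcP] at hcnt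
        omega
      obtain ⟨ss, rest, heq, hlen⟩ := ih T' hcnt'
      refine ⟨P.prod :: ss, rest, ?_, by simp [hlen]⟩
      subst hPT
      rw [List.prod_append, List.prod_cons, heq, List.map_cons, List.prod_cons]
      simp [mul_assoc]
  have CE : ∀ L : List S, T ≤ L.count q → L.prod = 0 := by
    intro L hc
    obtain ⟨ss, rest, heq, hlen⟩ := DEC T L hc
    rw [heq, coreE ss (le_of_eq hlen.symm), zero_mul]
  -- nilpotency exponent for p
  obtain ⟨M0', hM0'⟩ := hp
  set M0 := M0' + 1 with hM0def
  have hp0 : p ^ M0 = 0 := by rw [hM0def, pow_succ, hM0', zero_mul]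
  have ppow0 : ∀ k, M0 ≤ k → p^k = 0 := by
    intro k hk
    have : k = M0 + (k - M0) := by omega
    rw [this, pow_add, hp0, zero_mul]
  -- word zero
  have WZ : ∀ len (L : List S), L.length ≤ len → (∀ s ∈ L, s = p ∨ s = q) →
      ((L.count q + 1) * M0 + L.count q ≤ L.length ∨ T ≤ L.count q) → L.prod = 0 := by
    intro len
    induction len with
    | zero =>
      intro L hL hmem hcond
      have hnil : L = [] := List.eq_nil_of_length_eq_zero (by omega)
      subst hnil
      rcases hcond with hc | hc
      · exfalso
        simp only [List.count_nil, List.length_nil, Nat.le_zero] at hc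
        omega
      · exact CE [] (by simpa using hc)
    | succ len ih =>
      intro L hL hmem hcond
      rcases hcond with hc | hc
      swap
      · exact CE L hc
      by_cases hc0 : L.count q = 0
      · have hallp : ∀ s ∈ L, s = p := by
          intro s hs
          rcases hmem s hs with h' | h'
          · exact h'
          · exfalso
            have : q ∈ L := h' ▸ hs
            have := List.count_pos_iff.mpr this
            omega
        rw [List.prod_eq_pow_card L p hallp]
        rw [hc0] at hc
        exact ppow0 _ (by omega)
      · have hqL : q ∈ L := List.count_pos_iff.mp (by omega)
        obtain ⟨A, L', hAL, hnA⟩ := firstOcc hqL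
        have hcA : A.count q = 0 := List.count_eq_zero.mpr hnA
        have hcnt : L.count q = L'.count q + 1 := by
          subst hAL
          simp [List.count_append, hcA]
        have hallA : ∀ s ∈ A, s = p := by
          intro s hs
          rcases hmem s (by subst hAL; simp [hs]) with h' | h'
          · exact h'
          · exact absurd (h' ▸ hs) hnA
        by_cases hAlen : M0 ≤ A.length
        · have : A.prod = 0 := by
            rw [List.prod_eq_pow_card A p hallA]
            exact ppow0 _ hAlen
          subst hAL
          rw [List.prod_append, this, zero_mul]
        · -- A.length < M0
          have hlenL : L.length = A.length + 1 + L'.length := by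
            subst hAL; simp; omega
          have hmul : (L'.count q + 1 + 1) * M0 = (L'.count q + 1) * M0 + M0 := by ring
          have hcond' : (L'.count q + 1) * M0 + L'.count q ≤ L'.length := by
            rw [hcnt] at hc
            omega
          have hL' : L'.length ≤ len := by omega
          have hmem' : ∀ s ∈ L', s = p ∨ s = q := by
            intro s hs
            exact hmem s (by subst hAL; simp [hs])
          have hzero := ih L' hL' hmem' (Or.inl hcond')
          subst hAL
          rw [List.prod_append, List.prod_cons, hzero, mul_zero, mul_zero]
  -- assemble
  set Mbig := T * M0 + T with hMbig
  refine ⟨Mbig, ?_⟩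
  obtain ⟨ws, hwlen, hrepw⟩ := expandL p q Mbig
  rw [hrepw]
  refine List.sum_eq_zero fun y hy => ?_
  obtain ⟨w, hw, rfl⟩ := List.mem_map.mp hy
  set L := w.map fun b => if b then p else q with hLw
  have hlenL : L.length = Mbig := by rw [hLw, List.length_map, hwlen w hw]
  have hmemL : ∀ s ∈ L, s = p ∨ s = q := by
    intro s hs
    obtain ⟨b, _, rfl⟩ := List.mem_map.mp hs
    cases b
    · right; simp
    · left; simp
  refine WZ Mbig L (le_of_eq hlenL) hmemL ?_
  by_cases hcq : T ≤ L.count q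
  · exact Or.inr hcq
  · refine Or.inl ?_
    rw [hlenL, hMbig]
    have h1 : L.count q + 1 ≤ T := by omega
    have h2 : (L.count q + 1) * M0 ≤ T * M0 := Nat.mul_le_mul_right M0 h1
    omega

end C5

theorem nilpotent_iff_coeffs_nilpotent {R S : Type*} [Ring R] [Ring S]
    (α : R →+* R) (φ : R →+* S) (x : S) (hS : IsSkewPolynomialRing α φ x)
    (hα : AlphaCondition α) (h : IsLNZS R) :
    ∀ f : ℕ →₀ R, IsNilpotent (toSkewPoly φ x f) ↔ ∀ i : ℕ, IsNilpotent (f i) := by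
  classical
  intro f
  constructor
  · intro hnil
    have hard : ∀ (nc : ℕ) (F : ℕ →₀ R), F.support.card ≤ nc →
        IsNilpotent (toSkewPoly φ x F) → ∀ i, IsNilpotent (F i) := by
      intro nc
      induction nc with
      | zero =>
        intro F hcard _ i
        have hF0 : F = 0 := by
          have : F.support = ∅ := Finset.card_eq_zero.mp (by omega)
          exact Finsupp.support_eq_empty.mp this
        rw [hF0]
        simpa using IsNilpotent.zero
      | succ nc ih =>
        intro F hcard hnilF i
        by_cases hF0 : F = 0
        · rw [hF0]; simpa using IsNilpotent.zero
        have hne : F.support.Nonempty := Finsupp.support_nonempty_iff.mpr hF0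
        set D := F.support.max' hne with hD
        obtain ⟨M, hM⟩ := hnilF
        have hM1 : (toSkewPoly φ x F)^(M+1) = 0 := by rw [pow_succ, hM, zero_mul]
        have hpow0 : powC α F (M+1) = 0 := by
          apply tsp_injective hS
          rw [tsp_powC hS, hM1, tsp_zero]
        have hco : powC α F (M+1) (D*(M+1)) = 0 := by rw [hpow0]; rfl
        have hFD : (F D)^(M+1) = 0 := by
          have := lead_ext hα F hne M 1 (by rw [hco, mul_zero])
          simpa using this
        have hHnil : ∀ j, IsNilpotent ((Finsupp.single D (-F D) : ℕ →₀ R) j) := by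
          intro j
          rw [Finsupp.single_apply]
          split_ifs with hji
          · exact IsNilpotent.neg ⟨M+1, hFD⟩
          · exact IsNilpotent.zero
        have hnext : IsNilpotent (toSkewPoly φ x (F + Finsupp.single D (-F D))) := by
          rw [tsp_add]
          exact lemD hS hα h (toSkewPoly φ x F) ⟨M, hM⟩ _ hHnil
        have herase : F + Finsupp.single D (-F D) = F.erase D := by
          ext j
          by_cases hj : j = D
          · subst hj
            simp
          · have hDj : D ≠ j := fun h' => hj h'.symm
            simp [Finsupp.single_apply, hDj, Finsupp.erase_ne hj]
        have hcard' : (F.erase D).support.card ≤ nc := by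
          rw [Finsupp.support_erase]
          have hmem : D ∈ F.support := F.support.max'_mem hne
          rw [Finset.card_erase_of_mem hmem]
          omega
        have hall := ih (F.erase D) hcard' (by rw [← herase]; exact hnext)
        by_cases hiD : i = D
        · rw [hiD]; exact ⟨M+1, hFD⟩
        · have := hall i
          rwa [Finsupp.erase_ne hiD] at this
    exact hard f.support.card f le_rfl hnil
  · exact easy_dir hS hα h f
end

section
/- Let R be a ring satisfying the α-condition for an endomorphism α, and suppose R is α-skew Armendariz. Then R is LNZS if and only if the skew polynomial ring R[x; α] is LNZS. -/
section Aux
variable {R S : Type*} [Ring R] [Ring S] {α : R →+* R} {φ : R →+* S} {x : S}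

lemma alpha_iter (hα : AlphaCondition α) (a b : R) (n : ℕ) :
    a * b = 0 ↔ a * (⇑α)^[n] b = 0 := by
  induction n generalizing b with
  | zero => simp
  | succ n ih =>
    rw [Function.iterate_succ_apply]
    exact (hα a b).trans (ih (α b))

lemma x_pow_comm (hS : IsSkewPolynomialRing α φ x) (m : ℕ) (w : R) :
    x ^ m * φ w = φ ((⇑α)^[m] w) * x ^ m := by
  induction m with
  | zero => simp
  | succ m ih =>
    rw [pow_succ', mul_assoc, ih, ← mul_assoc, hS.skew_comm,
      Function.iterate_succ_apply', mul_assoc]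

lemma phi_eq_zero (hS : IsSkewPolynomialRing α φ x) {r : R} (h : φ r = 0) : r = 0 := by
  have h1 : toSkewPoly φ x (Finsupp.single 0 r) = 0 := by
    rw [toSkewPoly, Finsupp.sum_single_index (by simp)]
    simp [h]
  simpa using Finsupp.single_eq_zero.mp (hS.repr_indep _ h1)

lemma ann_pow_mul (hS : IsSkewPolynomialRing α φ x) (hα : AlphaCondition α)
    {d : R} {f : ℕ →₀ R} (hd : ∀ i, d * f i = 0) (m : ℕ) :
    φ d * x ^ m * toSkewPoly φ x f = 0 := by
  rw [toSkewPoly, Finsupp.mul_sum, Finsupp.sum]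
  apply Finset.sum_eq_zero
  intro i _
  have h1 : φ d * x ^ m * (φ (f i) * x ^ i)
      = φ (d * (⇑α)^[m] (f i)) * (x ^ m * x ^ i) := by
    calc φ d * x ^ m * (φ (f i) * x ^ i) = φ d * (x ^ m * φ (f i)) * x ^ i := by
          noncomm_ring
      _ = φ d * (φ ((⇑α)^[m] (f i)) * x ^ m) * x ^ i := by rw [x_pow_comm hS]
      _ = φ (d * (⇑α)^[m] (f i)) * (x ^ m * x ^ i) := by rw [map_mul]; noncomm_ring
  rw [h1, (alpha_iter hα d (f i) m).mp (hd i), map_zero, zero_mul]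
lemma coeff_pow_zero (hS : IsSkewPolynomialRing α φ x) (hα : AlphaCondition α)
    (hArm : ∀ f g : ℕ →₀ R, toSkewPoly φ x f * toSkewPoly φ x g = 0 →
      ∀ i j : ℕ, f i * (⇑α)^[i] (g j) = 0) (n : ℕ) :
    ∀ (b : R) (f : ℕ →₀ R), φ b * (toSkewPoly φ x f) ^ n = 0 → ∀ i, b * (f i) ^ n = 0 := by
  induction n with
  | zero =>
    intro b f h i
    rw [pow_zero, mul_one] at h ⊢
    exact phi_eq_zero hS h
  | succ n ih =>
    intro b f h i
    obtain ⟨h', hh'⟩ := hS.repr_surj ((toSkewPoly φ x f) ^ n)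
    set g : ℕ →₀ R := Finsupp.mapRange (fun a => b * a) (mul_zero b) f with hg
    have hgi : ∀ i, g i = b * f i := fun i => by rw [hg, Finsupp.mapRange_apply]
    have hgts : toSkewPoly φ x g = φ b * toSkewPoly φ x f := by
      rw [toSkewPoly, hg, Finsupp.sum_mapRange_index (by simp), toSkewPoly, Finsupp.mul_sum]
      apply Finsupp.sum_congr
      intro j _
      rw [map_mul, mul_assoc]
    have hmul : toSkewPoly φ x g * toSkewPoly φ x h' = 0 := by
      rw [hgts, hh', mul_assoc, ← pow_succ']
      exact h
    have hcoef : ∀ j, (b * f i) * h' j = 0 := by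
      intro j
      have h2 := hArm g h' hmul i j
      rw [hgi] at h2
      exact (alpha_iter hα _ _ i).mpr h2
    have h3 : φ (b * f i) * (toSkewPoly φ x f) ^ n = 0 := by
      rw [← hh']
      simpa using ann_pow_mul hS hα hcoef 0
    have h4 := ih (b * f i) f h3 i
    rw [pow_succ', ← mul_assoc]
    exact h4

lemma term_ann (hS : IsSkewPolynomialRing α φ x) (hα : AlphaCondition α)
    {b c : R} {j k : ℕ} {f : ℕ →₀ R} (hd : ∀ i, (b * (⇑α)^[j] c) * f i = 0) :
    φ b * x ^ j * (φ c * x ^ k * toSkewPoly φ x f) = 0 := by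
  have h1 : φ b * x ^ j * (φ c * x ^ k)
      = φ (b * (⇑α)^[j] c) * x ^ (j + k) := by
    calc φ b * x ^ j * (φ c * x ^ k) = φ b * (x ^ j * φ c) * x ^ k := by noncomm_ring
      _ = φ b * (φ ((⇑α)^[j] c) * x ^ j) * x ^ k := by rw [x_pow_comm hS]
      _ = φ (b * (⇑α)^[j] c) * x ^ (j + k) := by rw [map_mul, pow_add]; noncomm_ring
  calc φ b * x ^ j * (φ c * x ^ k * toSkewPoly φ x f)
      = (φ b * x ^ j * (φ c * x ^ k)) * toSkewPoly φ x f := by noncomm_ring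
    _ = φ (b * (⇑α)^[j] c) * x ^ (j + k) * toSkewPoly φ x f := by rw [h1]
    _ = 0 := ann_pow_mul hS hα hd (j + k)

end Aux

theorem isLNZS_iff_skewPoly_isLNZS {R S : Type*} [Ring R] [Ring S]
    (α : R →+* R) (φ : R →+* S) (x : S) (hS : IsSkewPolynomialRing α φ x)
    (hα : AlphaCondition α)
    (hArm : ∀ f g : ℕ →₀ R, toSkewPoly φ x f * toSkewPoly φ x g = 0 →
      ∀ i j : ℕ, f i * (⇑α)^[i] (g j) = 0) :
    IsLNZS R ↔ IsLNZS S := by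
  constructor
  · -- R LNZS → S LNZS
    intro hR s hs
    obtain ⟨n, hn⟩ := hs
    obtain ⟨f, hf⟩ := hS.repr_surj s
    have hcoef : ∀ i, IsNilpotent (f i) := by
      intro i
      refine ⟨n, ?_⟩
      have h1 : φ (1 : R) * (toSkewPoly φ x f) ^ n = 0 := by
        rw [map_one, one_mul, hf, hn]
      simpa using coeff_pow_zero hS hα hArm n 1 f h1 i
    refine ⟨TwoSidedIdeal.mk' {g : S | g * s = 0}
      (by simp)
      (fun {a b} ha hb => by simp only [Set.mem_setOf_eq] at *; rw [add_mul, ha, hb, add_zero])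
      (fun {a} ha => by simp only [Set.mem_setOf_eq] at *; rw [neg_mul, ha, neg_zero])
      (fun {a b} hb => by simp only [Set.mem_setOf_eq] at *; rw [mul_assoc, hb, mul_zero])
      (fun {a b} ha => ?_), fun g => by rw [TwoSidedIdeal.mem_mk']; rfl⟩
    -- mul_mem_right : a * s = 0 → a * b * s = 0
    simp only [Set.mem_setOf_eq] at ha ⊢
    obtain ⟨gb, hgb⟩ := hS.repr_surj a
    obtain ⟨gc, hgc⟩ := hS.repr_surj b
    have hbf : ∀ j i, gb j * f i = 0 := by
      intro j i
      refine (alpha_iter hα _ _ j).mpr (hArm gb f ?_ j i)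
      rw [hgb, hf, ha]
    have hbrf : ∀ (j : ℕ) (r : R) (i : ℕ), gb j * r * f i = 0 := by
      intro j r i
      obtain ⟨I, hI⟩ := hR (f i) (hcoef i)
      exact (hI _).mp (I.mul_mem_right _ _ ((hI _).mpr (hbf j i)))
    rw [mul_assoc, ← hgb, ← hgc, ← hf, toSkewPoly, Finsupp.sum_mul, Finsupp.sum]
    apply Finset.sum_eq_zero
    intro j _
    rw [toSkewPoly, Finsupp.sum_mul, Finsupp.mul_sum, Finsupp.sum]
    apply Finset.sum_eq_zero
    intro k _
    exact term_ann hS hα (fun i => hbrf j ((⇑α)^[j] (gc k)) i)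
  · -- S LNZS → R LNZS
    intro hSL a ha
    obtain ⟨n, hn⟩ := ha
    obtain ⟨J, hJ⟩ := hSL (φ a) ⟨n, by rw [← map_pow, hn, map_zero]⟩
    refine ⟨TwoSidedIdeal.mk' {r : R | r * a = 0}
      (by simp)
      (fun {u v} hu hv => by simp only [Set.mem_setOf_eq] at *; rw [add_mul, hu, hv, add_zero])
      (fun {u} hu => by simp only [Set.mem_setOf_eq] at *; rw [neg_mul, hu, neg_zero])
      (fun {u v} hv => by simp only [Set.mem_setOf_eq] at *; rw [mul_assoc, hv, mul_zero])
      (fun {u v} hu => ?_), fun r => by rw [TwoSidedIdeal.mem_mk']; rfl⟩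
    simp only [Set.mem_setOf_eq] at hu ⊢
    have h1 : φ u ∈ J := (hJ _).mpr (by rw [← map_mul, hu, map_zero])
    have h2 : φ u * φ v ∈ J := J.mul_mem_right _ _ h1
    have h3 := (hJ _).mp h2
    apply phi_eq_zero hS
    rw [map_mul, map_mul, h3]
end
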